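/- arXiv:2303.02757 — 5 statements merged into one kernel-verified Lean document; each statement's English description precedes it below -/
import Mathlib

section
/- Every graph without a component of order at most two has a spanning forest each of whose components is a 1-star. -/
open SimpleGraph

variable {V : Type*}

/-- The union of the colors of the edges incident to a vertex. -/
def unionAt [Fintype V] [DecidableEq V] (G : SimpleGraph V) [DecidableRel G.Adj]
    {α : Type*} [DecidableEq α] (c : Sym2 V → Finset α) (v : V) : Finset α :=
  (G.neighborFinset v).biUnion fun u => c s(v, u)

/-- `c` is a union vertex-distinguishing edge coloring of `G` with colors
nonempty subsets of `[k]`. -/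
def IsUVD [Fintype V] [DecidableEq V] (G : SimpleGraph V) [DecidableRel G.Adj]
    (k : ℕ) (c : Sym2 V → Finset (Fin k)) : Prop :=
  (∀ e ∈ G.edgeSet, c e ≠ ∅) ∧ (∀ v, unionAt G c v ≠ ∅) ∧
    Function.Injective (unionAt G c)

/-- The union vertex-distinguishing chromatic index. -/
noncomputable def chiUnion [Fintype V] [DecidableEq V] (G : SimpleGraph V)
    [DecidableRel G.Adj] : ℕ :=
  sInf {k | ∃ c : Sym2 V → Finset (Fin k), IsUVD G k c}

/-- `G` has no connected component of order at most two. -/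
def NoSmallComponent (G : SimpleGraph V) : Prop :=
  ∀ v : V, ∃ u w : V, u ≠ w ∧ u ≠ v ∧ w ≠ v ∧ G.Reachable v u ∧ G.Reachable v w

/-- The number of vertices of the component of `v`. -/
noncomputable def compSize (F : SimpleGraph V) (v : V) : ℕ := {u | F.Reachable v u}.ncard

/-- `v` is the center of a component of `F` that is a 1-star. -/
def Is1StarCenter (F : SimpleGraph V) (v : V) : Prop :=
  3 ≤ compSize F v ∧ (∀ u, F.Reachable v u → F.dist v u ≤ 2) ∧
    (∀ u, F.Adj v u → {x | F.Adj u x}.ncard ≤ 2)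

/-- `F` is a 1-star: a star on at least three vertices with each edge
subdivided at most once. -/
def Is1Star (F : SimpleGraph V) : Prop := F.Connected ∧ ∃ v, Is1StarCenter F v

/-- `F` is a forest each of whose components is a 1-star. -/
def IsForestOf1Stars (F : SimpleGraph V) : Prop :=
  F.IsAcyclic ∧ ∀ w : V, ∃ v, F.Reachable w v ∧ Is1StarCenter F v

/-- `A 1, …, A m` is an `m`-star of sets. -/
def IsStar {α : Type*} [DecidableEq α] (m : ℕ) (A : ℕ → Finset α) : Prop :=
  (∀ i j, 1 ≤ i → i ≤ m → 1 ≤ j → j ≤ m → A i = A j → i = j) ∧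
  (m = 2 → A 2 ⊂ A 1) ∧
  (m = 3 → A 1 = A 2 ∪ A 3) ∧
  (4 ≤ m → A 1 = A 2 ∪ A 4 ∧
    ∀ i, 1 ≤ i → (2 * i ≤ m → A (2 * i) ⊂ A 1) ∧
      (2 * i + 1 ≤ m → A (2 * i + 1) ⊂ A (2 * i)))

/-- A collection of sets is an `m`-star. -/
def IsStarColl {α : Type*} [DecidableEq α] (m : ℕ) (S : Finset (Finset α)) : Prop :=
  ∃ A : ℕ → Finset α, IsStar m A ∧ S = (Finset.Icc 1 m).image A

/-! Take `F ≤ G` minimal without small components. Every edge of `F` is a bridge, since otherwise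
removing it would not change reachability; so `F` is a forest, and removing an edge `cx` creates a
small component, i.e. one of the two branches at `cx` has at most two vertices. A vertex all of
whose branches are small is the center of a 1-star. If no edge of a component has a large branch,
every vertex of it is a center; otherwise take a directed edge `cx` whose branch at `x` is large and
as small as possible: the branches at `x` away from `c` are strictly smaller (as `F` is a forest),
hence small, and the one towards `c` is small because the branch at `x` is not, so `x` is a center.
-/

section

variable {G : SimpleGraph V}

theorem SimpleGraph.Reachable.deleteEdges_or {a b u v : V} (h : G.Reachable a b) :
    (G.deleteEdges {s(u, v)}).Reachable a b ∨ (G.deleteEdges {s(u, v)}).Reachable a u ∨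
      (G.deleteEdges {s(u, v)}).Reachable a v := by
  obtain ⟨p⟩ := h
  induction p with
  | nil => exact .inl .rfl
  | @cons x y z hxy _ ih =>
    by_cases he : s(x, y) = s(u, v)
    · obtain ⟨rfl, -⟩ | ⟨rfl, -⟩ := Sym2.eq_iff.mp he
      · exact .inr (.inl .rfl)
      · exact .inr (.inr .rfl)
    · have hxy' : (G.deleteEdges {s(u, v)}).Adj x y := (deleteEdges_adj ..).mpr ⟨hxy, he⟩
      exact ih.imp hxy'.reachable.trans (Or.imp hxy'.reachable.trans hxy'.reachable.trans)

theorem SimpleGraph.Reachable.deleteEdges_of_not_isBridge {a b u v : V} (h : G.Reachable a b)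
    (huv : ¬ G.IsBridge s(u, v)) : (G.deleteEdges {s(u, v)}).Reachable a b := by
  rw [isBridge_iff, not_not] at huv
  have toEndpoint : ∀ {x y}, G.Reachable x y →
      (G.deleteEdges {s(u, v)}).Reachable x y ∨ (G.deleteEdges {s(u, v)}).Reachable x u :=
    fun hxy => hxy.deleteEdges_or.imp_right (Or.elim · id (·.trans huv.symm))
  rcases toEndpoint h with hab | hau
  · exact hab
  rcases toEndpoint h.symm with hba | hbu
  · exact hba.symm
  · exact hau.trans hbu.symm

theorem compSize_eq_of_reachable {a b : V} (h : G.Reachable a b) :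
    compSize G a = compSize G b := by
  unfold compSize
  congr 1
  ext y
  exact ⟨h.symm.trans, h.trans⟩

theorem noSmallComponent_iff [Finite V] : NoSmallComponent G ↔ ∀ v, 2 < compSize G v := by
  refine forall_congr' fun v => ?_
  rw [compSize, Set.two_lt_ncard_iff]
  constructor
  · rintro ⟨u, w, huw, huv, hwv, hu, hw⟩
    exact ⟨v, u, w, .rfl, hu, hw, huv.symm, hwv.symm, huw⟩
  · rintro ⟨a, b, c, ha, hb, hc, hab, hac, hbc⟩
    by_cases hav : a = v
    · subst hav
      exact ⟨b, c, hbc, Ne.symm hab, Ne.symm hac, hb, hc⟩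
    by_cases hbv : b = v
    · subst hbv
      exact ⟨a, c, hac, hab, Ne.symm hbc, ha, hc⟩
    · exact ⟨a, b, hab, hav, hbv, ha, hb⟩

theorem adj_of_reachable_of_compSize_le_two [Finite V] {x y : V} (hxy : G.Reachable x y)
    (hne : x ≠ y) (hsmall : compSize G x ≤ 2) : G.Adj x y := by
  obtain ⟨p⟩ := hxy
  cases p with
  | nil => exact absurd rfl hne
  | @cons _ z _ hxz _ =>
    have hcomp : {x, y} = {u | G.Reachable x u} := by
      refine Set.eq_of_subset_of_ncard_le ?_ (by rwa [Set.ncard_pair hne]) (Set.toFinite _)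
      rintro u (rfl | rfl)
      exacts [.rfl, ⟨.cons hxz ‹_›⟩]
    have hz : z ∈ ({x, y} : Set V) := hcomp ▸ hxz.reachable
    obtain rfl | rfl := hz
    · exact absurd rfl hxz.ne
    · exact hxz

end

def branch (F : SimpleGraph V) (c x : V) : Set V :=
  {y | (F.deleteEdges {s(c, x)}).Reachable x y}

section Branch

variable {F : SimpleGraph V} {c x y : V}

theorem exists_mem_branch_of_reachable (hcy : F.Reachable c y) (hne : c ≠ y) :
    ∃ x, F.Adj c x ∧ y ∈ branch F c x := by
  classical
  obtain ⟨p⟩ := hcy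
  cases hp : p.bypass with
  | nil => exact absurd rfl hne
  | @cons _ x _ hcx q =>
    have hc : c ∉ q.support := (Walk.cons_isPath_iff _ _).mp (hp ▸ p.bypass_isPath) |>.2
    exact ⟨x, hcx, reachable_deleteEdges_iff_exists_walk.mpr
      ⟨q, fun he => hc (q.fst_mem_support_of_mem_edges he)⟩⟩

theorem branch_ssubset_branch (hacyc : F.IsAcyclic) (hcx : F.Adj c x) (hxy : F.Adj x y)
    (hyc : y ≠ c) : branch F x y ⊂ branch F c x := by
  classical
  have hbridge := isAcyclic_iff_forall_adj_isBridge.mp hacyc hxy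
  rw [isBridge_iff] at hbridge
  refine Set.ssubset_iff_of_subset ?_ |>.mpr ⟨x, .rfl, fun hx => hbridge hx.symm⟩
  intro z hz
  obtain ⟨q, hq⟩ := reachable_deleteEdges_iff_exists_walk.mp hz
  have hx : x ∉ q.support := fun hx => hbridge <| Reachable.symm <|
    reachable_deleteEdges_iff_exists_walk.mpr
      ⟨q.takeUntil x hx, fun he => hq (q.edges_takeUntil_subset_edges hx he)⟩
  refine reachable_deleteEdges_iff_exists_walk.mpr ⟨.cons hxy q, ?_⟩
  rw [Walk.edges_cons, List.mem_cons, not_or]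
  refine ⟨fun he => ?_, fun he => hx (q.snd_mem_support_of_mem_edges he)⟩
  obtain ⟨rfl, -⟩ | ⟨rfl, -⟩ := Sym2.eq_iff.mp he
  exacts [hcx.ne rfl, hyc rfl]

variable [Finite V]

theorem is1StarCenter_of_forall_ncard_branch_le_two (hnsc : NoSmallComponent F)
    (hsmall : ∀ x, F.Adj c x → (branch F c x).ncard ≤ 2) : Is1StarCenter F c := by
  refine ⟨noSmallComponent_iff.mp hnsc c, fun y hcy => ?_, fun x hcx => ?_⟩
  · obtain rfl | hne := eq_or_ne c y
    · simp
    obtain ⟨x, hcx, hy⟩ := exists_mem_branch_of_reachable hcy hne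
    obtain rfl | hxy := eq_or_ne x y
    · exact (dist_le (hcx.toWalk)).trans (by simp)
    obtain ⟨hxy', -⟩ :=
      (deleteEdges_adj ..).mp (adj_of_reachable_of_compSize_le_two hy hxy (hsmall x hcx))
    exact (dist_le (.cons hcx hxy'.toWalk)).trans (by simp)
  · have hnbrs : {z | F.Adj x z} ⊆ insert c (branch F c x \ {x}) := by
      intro z hxz
      by_cases hzc : z = c
      · exact .inl hzc
      refine .inr ⟨Adj.reachable ((deleteEdges_adj ..).mpr ⟨hxz, fun he => ?_⟩), hxz.ne.symm⟩
      obtain ⟨rfl, -⟩ | ⟨-, rfl⟩ := Sym2.eq_iff.mp he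
      exacts [hcx.ne rfl, hzc rfl]
    calc {z | F.Adj x z}.ncard ≤ (insert c (branch F c x \ {x})).ncard :=
          Set.ncard_le_ncard hnbrs
      _ ≤ (branch F c x \ {x}).ncard + 1 := Set.ncard_insert_le _ _
      _ = (branch F c x).ncard := Set.ncard_sdiff_singleton_add_one (Reachable.rfl : x ∈ _)
      _ ≤ 2 := hsmall x hcx

end Branch

section Minimal

variable {F : SimpleGraph V} (hF : Minimal NoSmallComponent F)
include hF

theorem not_noSmallComponent_deleteEdges {u v : V} (huv : F.Adj u v) :
    ¬ NoSmallComponent (F.deleteEdges {s(u, v)}) := fun h => by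
  simpa using hF.le_of_le h (deleteEdges_le _) huv

theorem isAcyclic_of_minimal : F.IsAcyclic := by
  refine isAcyclic_iff_forall_adj_isBridge.mpr fun u v huv => by_contra fun hnb => ?_
  refine not_noSmallComponent_deleteEdges hF huv fun a => ?_
  obtain ⟨b, c, hbc, hba, hca, hab, hac⟩ := hF.1 a
  exact ⟨b, c, hbc, hba, hca, hab.deleteEdges_of_not_isBridge hnb,
    hac.deleteEdges_of_not_isBridge hnb⟩

variable [Finite V]

theorem ncard_branch_le_two_or {c x : V} (hcx : F.Adj c x) :
    (branch F c x).ncard ≤ 2 ∨ (branch F x c).ncard ≤ 2 := by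
  obtain ⟨z, hz⟩ : ∃ z, compSize (F.deleteEdges {s(c, x)}) z ≤ 2 := by
    simpa [noSmallComponent_iff] using not_noSmallComponent_deleteEdges hF hcx
  by_cases hzx : (F.deleteEdges {s(c, x)}).Reachable z x
  · exact .inl ((compSize_eq_of_reachable hzx).symm.le.trans hz)
  by_cases hzc : (F.deleteEdges {s(c, x)}).Reachable z c
  · have hbranch : branch F x c = {y | (F.deleteEdges {s(c, x)}).Reachable c y} := by
      rw [branch, Sym2.eq_swap]
    exact .inr (hbranch ▸ (compSize_eq_of_reachable hzc).symm.le.trans hz)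
  have hcomp : compSize (F.deleteEdges {s(c, x)}) z = compSize F z := by
    unfold compSize
    congr 1
    ext y
    refine ⟨(·.mono (deleteEdges_le _)), fun hy => ?_⟩
    obtain hy | hzc' | hzx' := hy.deleteEdges_or (u := c) (v := x)
    exacts [hy, absurd hzc' hzc, absurd hzx' hzx]
  have := noSmallComponent_iff.mp hF.1 z
  omega

theorem exists_reachable_is1StarCenter (w : V) : ∃ c, F.Reachable w c ∧ Is1StarCenter F c := by
  set S := {e : V × V | F.Reachable w e.1 ∧ F.Adj e.1 e.2 ∧ 3 ≤ (branch F e.1 e.2).ncard}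
  rcases S.eq_empty_or_nonempty with hS | hS
  · refine ⟨w, .rfl, is1StarCenter_of_forall_ncard_branch_le_two hF.1 fun x hwx => ?_⟩
    by_contra hbig
    exact Set.eq_empty_iff_forall_notMem.mp hS (w, x)
      ⟨.rfl, hwx, (by omega : 3 ≤ (branch F w x).ncard)⟩
  obtain ⟨⟨c, x⟩, ⟨hwc, hcx, hbig⟩, hmin⟩ :=
    S.exists_min_image (fun e => (branch F e.1 e.2).ncard) S.toFinite hS
  dsimp only at hwc hcx hbig hmin
  have hwx : F.Reachable w x := hwc.trans hcx.reachable
  refine ⟨x, hwx, is1StarCenter_of_forall_ncard_branch_le_two hF.1 fun y hxy => ?_⟩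
  obtain rfl | hyc := eq_or_ne y c
  · exact (ncard_branch_le_two_or hF hcx).resolve_left (by omega)
  by_contra hy
  have hlt := Set.ncard_lt_ncard (branch_ssubset_branch (isAcyclic_of_minimal hF) hcx hxy hyc)
  have : (branch F c x).ncard ≤ (branch F x y).ncard :=
    hmin (x, y) ⟨hwx, hxy, (by omega : 3 ≤ (branch F x y).ncard)⟩
  omega

end Minimal

theorem stmt2 [Fintype V] (G : SimpleGraph V) (h : NoSmallComponent G) :
    ∃ F : SimpleGraph V, F ≤ G ∧ IsForestOf1Stars F := by
  obtain ⟨F, hFG, hF⟩ := exists_minimal_le_of_wellFoundedLT NoSmallComponent G h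
  exact ⟨F, hFG, isAcyclic_of_minimal hF, exists_reachable_is1StarCenter hF⟩
end

section
/- Let T be a tree with at least 3 vertices such that deleting any edge of T creates a component with at most 2 vertices. Then T is a 1-star. -/
open SimpleGraph

variable {V : Type*}

/-!
Every edge `ab` of `T` splits the vertices into the side of `a` and the side of `b`, and by
hypothesis one of them has at most two vertices. A vertex `x` all of whose edges `xu` leave `u`
on a side of at most two vertices is the centre of a 1-star: every other vertex is `u` or the
other vertex on the side of `u`, and `u` has no neighbours besides `x` and that vertex. Such a
vertex exists: if `x` is not one, move to a neighbour `u` on a big side, so that the side of `x`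
is small; if `u` is not one either, move on to `u'`, whose sides away from `u` are now all small
because the side of `u'` contains the three vertices `u'`, `u`, `x`.
-/

namespace SimpleGraph

variable {G F : SimpleGraph V}

lemma compSize_eq_of_reachable {v w : V} (h : F.Reachable v w) :
    compSize F w = compSize F v := by
  unfold compSize
  congr 1
  ext z
  exact ⟨h.trans, h.symm.trans⟩

lemma three_le_compSize_of_adj_of_adj [Finite V] {a b c : V} (hab : F.Adj a b) (hbc : F.Adj b c)
    (hac : a ≠ c) : 3 ≤ compSize F a := by
  have hsub : ({a, b, c} : Set V) ⊆ {z | F.Reachable a z} := by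
    rintro z (rfl | rfl | rfl)
    · exact Reachable.refl _
    · exact hab.reachable
    · exact hab.reachable.trans hbc.reachable
  calc 3 = ({a, b, c} : Set V).ncard := by
        rw [Set.ncard_insert_of_notMem (by simp [hab.ne, hac]), Set.ncard_pair hbc.ne]
    _ ≤ compSize F a := Set.ncard_le_ncard hsub

lemma adj_of_reachable_of_compSize_le_two [Finite V] {v w : V} (h : F.Reachable v w)
    (hvw : v ≠ w) (hsize : compSize F v ≤ 2) : F.Adj v w := by
  obtain ⟨_ | @⟨_, d, _, hvd, p⟩⟩ := h
  · exact absurd rfl hvw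
  have hcomp : ({v, w} : Set V) = {z | F.Reachable v z} := by
    refine Set.eq_of_subset_of_ncard_le ?_ (by rw [Set.ncard_pair hvw]; exact hsize)
    rintro z (rfl | rfl)
    exacts [Reachable.refl _, ⟨.cons hvd p⟩]
  have hd : d ∈ ({v, w} : Set V) := hcomp ▸ hvd.reachable
  rcases hd with rfl | rfl
  exacts [absurd rfl hvd.ne, hvd]

lemma Walk.reachable_deleteEdges_or {a b x w : V} (p : G.Walk x w)
    (hx : (G.deleteEdges {s(a, b)}).Reachable a x ∨ (G.deleteEdges {s(a, b)}).Reachable b x) :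
    (G.deleteEdges {s(a, b)}).Reachable a w ∨ (G.deleteEdges {s(a, b)}).Reachable b w := by
  induction p with
  | nil => exact hx
  | @cons x c w h p ih =>
    apply ih
    by_cases he : s(x, c) = s(a, b)
    · rcases Sym2.eq_iff.mp he with ⟨rfl, rfl⟩ | ⟨rfl, rfl⟩
      exacts [Or.inr (Reachable.refl _), Or.inl (Reachable.refl _)]
    · have hadj : (G.deleteEdges {s(a, b)}).Adj x c := deleteEdges_adj.mpr ⟨h, he⟩
      exact hx.imp (·.trans hadj.reachable) (·.trans hadj.reachable)

lemma Connected.reachable_deleteEdges_or (hc : G.Connected) (a b w : V) :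
    (G.deleteEdges {s(a, b)}).Reachable a w ∨ (G.deleteEdges {s(a, b)}).Reachable b w :=
  (hc a w).some.reachable_deleteEdges_or (.inl (Reachable.refl _))

lemma Connected.compSize_deleteEdges_le_two_of_three_le (hc : G.Connected) {a b : V}
    (hsmall : ∃ w, compSize (G.deleteEdges {s(a, b)}) w ≤ 2)
    (hb : 3 ≤ compSize (G.deleteEdges {s(a, b)}) b) :
    compSize (G.deleteEdges {s(a, b)}) a ≤ 2 := by
  obtain ⟨w, hw⟩ := hsmall
  rcases hc.reachable_deleteEdges_or a b w with h | h
  · rwa [← compSize_eq_of_reachable h]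
  · rw [compSize_eq_of_reachable h] at hw
    omega

lemma dist_le_two_of_forall_adj_compSize_le_two [Finite V] {x : V}
    (hx : ∀ u, G.Adj x u → compSize (G.deleteEdges {s(x, u)}) u ≤ 2) {w : V}
    (hw : G.Reachable x w) :
    G.dist x w ≤ 2 := by
  classical
  by_cases hwx : w = x
  · simp [hwx]
  obtain ⟨_ | @⟨_, c, _, hxc, q⟩, hpath⟩ := hw.some.toPath
  · exact absurd rfl hwx
  have hreach : (G.deleteEdges {s(x, c)}).Reachable c w :=
    reachable_deleteEdges_iff_exists_walk.mpr
      ⟨q, fun he => (Walk.cons_isPath_iff _ _).mp hpath |>.2 (q.fst_mem_support_of_mem_edges he)⟩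
  by_cases hwc : c = w
  · subst hwc
    exact (dist_le (Walk.cons hxc .nil)).trans (by simp)
  · have hcw := (deleteEdges_adj.mp (adj_of_reachable_of_compSize_le_two hreach hwc (hx _ hxc))).1
    exact (dist_le (Walk.cons hxc (Walk.cons hcw .nil))).trans (by simp)

lemma ncard_adj_le_two_of_compSize_le_two [Finite V] {x u : V} (hu : G.Adj x u)
    (hsize : compSize (G.deleteEdges {s(x, u)}) u ≤ 2) : {y | G.Adj u y}.ncard ≤ 2 := by
  set C := {z | (G.deleteEdges {s(x, u)}).Reachable u z}
  have hsub : {y | G.Adj u y} ⊆ insert x (C \ {u}) := by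
    intro y hy
    by_cases hyx : y = x
    · exact hyx ▸ Set.mem_insert _ _
    have hadj : (G.deleteEdges {s(x, u)}).Adj u y :=
      deleteEdges_adj.mpr ⟨hy, by simp [hyx, hu.ne']⟩
    exact Set.mem_insert_of_mem _ ⟨hadj.reachable, hadj.ne'⟩
  have hC : C.ncard ≤ 2 := hsize
  calc {y | G.Adj u y}.ncard ≤ (insert x (C \ {u})).ncard := Set.ncard_le_ncard hsub
    _ ≤ (C \ {u}).ncard + 1 := Set.ncard_insert_le _ _
    _ ≤ 2 := by rw [Set.ncard_sdiff_singleton_of_mem (show u ∈ C from Reachable.refl u)]; omega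

lemma Connected.is1StarCenter_of_forall_adj_compSize_le_two [Fintype V] (hc : G.Connected)
    (h3 : 3 ≤ Fintype.card V) {x : V}
    (hx : ∀ u, G.Adj x u → compSize (G.deleteEdges {s(x, u)}) u ≤ 2) : Is1StarCenter G x := by
  refine ⟨?_, fun w hw => dist_le_two_of_forall_adj_compSize_le_two hx hw,
    fun u hu => ncard_adj_le_two_of_compSize_le_two hu (hx u hu)⟩
  have hall : {u | G.Reachable x u} = Set.univ := Set.eq_univ_of_forall (hc x)
  rwa [compSize, hall, Set.ncard_univ, Nat.card_eq_fintype_card]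

lemma Connected.forall_adj_compSize_le_two_of_adj_of_adj [Finite V] (hc : G.Connected)
    (hdel : ∀ u v, G.Adj u v → ∃ w, compSize (G.deleteEdges {s(u, v)}) w ≤ 2)
    {x u u' : V} (hxu : G.Adj x u) (huu' : G.Adj u u') (hu'x : u' ≠ x)
    (hu : compSize (G.deleteEdges {s(u', u)}) u ≤ 2) :
    ∀ v, G.Adj u' v → compSize (G.deleteEdges {s(u', v)}) v ≤ 2 := by
  intro v hv
  by_cases hvu : v = u
  · exact hvu ▸ hu
  rw [Sym2.eq_swap]
  refine hc.compSize_deleteEdges_le_two_of_three_le (hdel v u' hv.symm) ?_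
  refine three_le_compSize_of_adj_of_adj (b := u) ?_ ?_ hu'x
  · exact deleteEdges_adj.mpr ⟨huu'.symm, by simp [Ne.symm hvu, hv.ne]⟩
  · exact deleteEdges_adj.mpr ⟨hxu.symm, by simp [Ne.symm hvu, huu'.ne]⟩

lemma Connected.exists_forall_adj_compSize_le_two [Finite V] (hc : G.Connected)
    (hdel : ∀ u v, G.Adj u v → ∃ w, compSize (G.deleteEdges {s(u, v)}) w ≤ 2) :
    ∃ x, ∀ u, G.Adj x u → compSize (G.deleteEdges {s(x, u)}) u ≤ 2 := by
  obtain ⟨x⟩ := hc.nonempty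
  by_contra! hbad
  obtain ⟨u, hxu, hu_big⟩ := hbad x
  obtain ⟨u', huu', hu'_big⟩ := hbad u
  have hx_small : compSize (G.deleteEdges {s(x, u)}) x ≤ 2 :=
    hc.compSize_deleteEdges_le_two_of_three_le (hdel x u hxu) hu_big
  have hu_small : compSize (G.deleteEdges {s(u, u')}) u ≤ 2 :=
    hc.compSize_deleteEdges_le_two_of_three_le (hdel u u' huu') hu'_big
  have hu'x : u' ≠ x := by
    rintro rfl
    rw [Sym2.eq_swap] at hu'_big
    omega
  obtain ⟨v, hv, hv_big⟩ := hbad u'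
  have := hc.forall_adj_compSize_le_two_of_adj_of_adj hdel hxu huu' hu'x
    (by rwa [Sym2.eq_swap]) v hv
  omega

end SimpleGraph

theorem stmt3 [Fintype V] (T : SimpleGraph V) (hT : T.IsTree)
    (h3 : 3 ≤ Fintype.card V)
    (hdel : ∀ u v : V, T.Adj u v → ∃ w, compSize (T.deleteEdges {s(u, v)}) w ≤ 2) :
    Is1Star T := by
  have hc := hT.connected
  obtain ⟨x, hx⟩ := hc.exists_forall_adj_compSize_le_two hdel
  exact ⟨hc, x, hc.is1StarCenter_of_forall_adj_compSize_le_two h3 hx⟩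
end

section
/- Let A ⊆ P([k−1])∖{∅} be an m-star and let A' = {A ∪ {k} : A ∈ A}. Then for each odd number i with 1 ≤ i ≤ m, the collection A ∪ A' can be partitioned into an i-star and a (2m−i)-star. -/
open SimpleGraph

variable {V : Type*}

open Finset

private lemma ins_ssub {k : ℕ} {X Y : Finset ℕ} (h : X ⊂ Y) (hkY : k ∉ Y) :
    insert k X ⊂ insert k Y := by
  rw [Finset.ssubset_iff_subset_ne] at h ⊢
  refine ⟨Finset.insert_subset_insert _ h.1, fun he => ?_⟩
  obtain ⟨y, hyY, hyX⟩ := Finset.exists_of_ssubset (Finset.ssubset_iff_subset_ne.2 h)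
  have hy : y ∈ insert k X := he ▸ Finset.mem_insert_of_mem hyY
  rcases Finset.mem_insert.1 hy with h1 | h2
  · exact hkY (h1 ▸ hyY)
  · exact hyX h2

private lemma hsub_of_isStar {A : ℕ → Finset ℕ} {m : ℕ} (h : IsStar m A) :
    ∀ j, 2 ≤ j → j ≤ m → A j ⊂ A 1 := by
  obtain ⟨hinj, h2, h3, h4⟩ := h
  intro j hj2 hjm
  by_cases hm4 : 4 ≤ m
  · obtain ⟨hu, hp⟩ := h4 hm4
    rcases Nat.even_or_odd j with ⟨t, ht⟩ | ⟨t, ht⟩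
    · have := (hp t (by omega)).1 (by omega)
      rwa [show 2 * t = j by omega] at this
    · have h1 := (hp t (by omega)).2 (by omega)
      have h2' := (hp t (by omega)).1 (by omega)
      rw [show 2 * t + 1 = j by omega] at h1
      exact h1.trans h2'
  · have hm2 : 2 ≤ m := le_trans hj2 hjm
    interval_cases m
    · interval_cases j
      exact h2 rfl
    · have hu := h3 rfl
      interval_cases j
      · refine Finset.ssubset_iff_subset_ne.2 ⟨hu ▸ Finset.subset_union_left, fun he => ?_⟩
        have := hinj 2 1 (by omega) (by omega) (by omega) (by omega) he
        omega
      · refine Finset.ssubset_iff_subset_ne.2 ⟨hu ▸ Finset.subset_union_right, fun he => ?_⟩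
        have := hinj 3 1 (by omega) (by omega) (by omega) (by omega) he
        omega

/-- label encoding: `2*j ↦ A j`, `2*j+1 ↦ insert k (A j)` -/
private def lab (k : ℕ) (A : ℕ → Finset ℕ) (c : ℕ) : Finset ℕ :=
  if c % 2 = 0 then A (c / 2) else insert k (A (c / 2))

private lemma lab_even (k : ℕ) (A : ℕ → Finset ℕ) (j : ℕ) : lab k A (2 * j) = A j := by
  have h1 : 2 * j % 2 = 0 := by omega
  have h2 : 2 * j / 2 = j := by omega
  simp [lab, h1, h2]

private lemma lab_odd (k : ℕ) (A : ℕ → Finset ℕ) (j : ℕ) :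
    lab k A (2 * j + 1) = insert k (A j) := by
  have h1 : ¬ ((2 * j + 1) % 2 = 0) := by omega
  have h2 : (2 * j + 1) / 2 = j := by omega
  simp [lab, h1, h2]

private lemma lab_inj {k m : ℕ} {A : ℕ → Finset ℕ}
    (hinj : ∀ i j, 1 ≤ i → i ≤ m → 1 ≤ j → j ≤ m → A i = A j → i = j)
    (hkA : ∀ j, 1 ≤ j → j ≤ m → k ∉ A j)
    {c d : ℕ} (hc1 : 2 ≤ c) (hc2 : c ≤ 2 * m + 1) (hd1 : 2 ≤ d) (hd2 : d ≤ 2 * m + 1)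
    (h : lab k A c = lab k A d) : c = d := by
  have hcr : 1 ≤ c / 2 ∧ c / 2 ≤ m := by omega
  have hdr : 1 ≤ d / 2 ∧ d / 2 ≤ m := by omega
  have hkc := hkA _ hcr.1 hcr.2
  have hkd := hkA _ hdr.1 hdr.2
  unfold lab at h
  by_cases h1 : c % 2 = 0 <;> by_cases h2 : d % 2 = 0 <;> simp [h1, h2] at h
  · have := hinj _ _ hcr.1 hcr.2 hdr.1 hdr.2 h; omega
  · exact absurd (h ▸ Finset.mem_insert_self k (A (d / 2))) hkc
  · exact absurd (h.symm ▸ Finset.mem_insert_self k (A (c / 2))) hkd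
  · have h' : A (c / 2) = A (d / 2) := by
      have := congrArg (fun s => Finset.erase s k) h
      simpa [Finset.erase_insert hkc, Finset.erase_insert hkd] using this
    have := hinj _ _ hcr.1 hcr.2 hdr.1 hdr.2 h'; omega

private lemma lab_image (k m : ℕ) (A : ℕ → Finset ℕ) :
    (Icc 2 (2 * m + 1)).image (lab k A) =
      (Icc 1 m).image A ∪ ((Icc 1 m).image A).image (insert k) := by
  rw [Finset.image_image]
  ext x
  simp only [Finset.mem_image, Finset.mem_union, Finset.mem_Icc, Function.comp]
  constructor
  · rintro ⟨c, hc, rfl⟩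
    by_cases h1 : c % 2 = 0
    · exact Or.inl ⟨c / 2, by omega, by simp [lab, h1]⟩
    · exact Or.inr ⟨c / 2, by omega, by simp [lab, h1]⟩
  · rintro (⟨j, hj, rfl⟩ | ⟨j, hj, rfl⟩)
    · exact ⟨2 * j, by omega, lab_even k A j⟩
    · exact ⟨2 * j + 1, by omega, lab_odd k A j⟩

private lemma glue_inj {k m : ℕ} {A : ℕ → Finset ℕ}
    (hinj : ∀ i j, 1 ≤ i → i ≤ m → 1 ≤ j → j ≤ m → A i = A j → i = j)
    (hkA : ∀ j, 1 ≤ j → j ≤ m → k ∉ A j)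
    {p : ℕ} (l : ℕ → ℕ)
    (hr : ∀ t, 1 ≤ t → t ≤ p → 2 ≤ l t ∧ l t ≤ 2 * m + 1)
    (hl : ∀ s t, 1 ≤ s → s ≤ p → 1 ≤ t → t ≤ p → l s = l t → s = t) :
    ∀ s t, 1 ≤ s → s ≤ p → 1 ≤ t → t ≤ p → lab k A (l s) = lab k A (l t) → s = t := by
  intro s t hs1 hs2 ht1 ht2 h
  exact hl s t hs1 hs2 ht1 ht2
    (lab_inj hinj hkA (hr s hs1 hs2).1 (hr s hs1 hs2).2 (hr t ht1 ht2).1 (hr t ht1 ht2).2 h)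

private lemma glue_main {k m : ℕ} {A : ℕ → Finset ℕ}
    (hinj : ∀ i j, 1 ≤ i → i ≤ m → 1 ≤ j → j ≤ m → A i = A j → i = j)
    (hkA : ∀ j, 1 ≤ j → j ≤ m → k ∉ A j)
    {p n : ℕ} (l₁ l₂ : ℕ → ℕ)
    (h₁ : ∀ t, 1 ≤ t → t ≤ p → 2 ≤ l₁ t ∧ l₁ t ≤ 2 * m + 1)
    (h₂ : ∀ t, 1 ≤ t → t ≤ n → 2 ≤ l₂ t ∧ l₂ t ≤ 2 * m + 1)
    (hcover : ∀ c, 2 ≤ c → c ≤ 2 * m + 1 →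
      (∃ t, 1 ≤ t ∧ t ≤ p ∧ l₁ t = c) ∨ (∃ t, 1 ≤ t ∧ t ≤ n ∧ l₂ t = c))
    (hdisj : ∀ s t, 1 ≤ s → s ≤ p → 1 ≤ t → t ≤ n → l₁ s ≠ l₂ t) :
    Disjoint ((Icc 1 p).image (fun t => lab k A (l₁ t)))
        ((Icc 1 n).image (fun t => lab k A (l₂ t))) ∧
      ((Icc 1 p).image (fun t => lab k A (l₁ t))) ∪
          ((Icc 1 n).image (fun t => lab k A (l₂ t))) =
        (Icc 1 m).image A ∪ ((Icc 1 m).image A).image (insert k) := by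
  constructor
  · rw [Finset.disjoint_left]
    rintro x hx1 hx2
    simp only [Finset.mem_image, Finset.mem_Icc] at hx1 hx2
    obtain ⟨s, hs, rfl⟩ := hx1
    obtain ⟨t, ht, heq⟩ := hx2
    have := lab_inj hinj hkA (h₂ t ht.1 ht.2).1 (h₂ t ht.1 ht.2).2
      (h₁ s hs.1 hs.2).1 (h₁ s hs.1 hs.2).2 heq
    exact hdisj s t hs.1 hs.2 ht.1 ht.2 this.symm
  · calc ((Icc 1 p).image (fun t => lab k A (l₁ t))) ∪
        ((Icc 1 n).image (fun t => lab k A (l₂ t)))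
        = ((Icc 1 p).image l₁).image (lab k A) ∪ ((Icc 1 n).image l₂).image (lab k A) := by
          rw [Finset.image_image, Finset.image_image]; rfl
      _ = (((Icc 1 p).image l₁) ∪ ((Icc 1 n).image l₂)).image (lab k A) :=
          (Finset.image_union _ _).symm
      _ = (Icc 2 (2 * m + 1)).image (lab k A) := by
          congr 1
          ext c
          simp only [Finset.mem_union, Finset.mem_image, Finset.mem_Icc]
          constructor
          · rintro (⟨t, ht, rfl⟩ | ⟨t, ht, rfl⟩)
            · exact ⟨(h₁ t ht.1 ht.2).1, (h₁ t ht.1 ht.2).2⟩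
            · exact ⟨(h₂ t ht.1 ht.2).1, (h₂ t ht.1 ht.2).2⟩
          · rintro ⟨hc1, hc2⟩
            rcases hcover c hc1 hc2 with ⟨t, ha, hb, hc⟩ | ⟨t, ha, hb, hc⟩
            · exact Or.inl ⟨t, ⟨ha, hb⟩, hc⟩
            · exact Or.inr ⟨t, ⟨ha, hb⟩, hc⟩
      _ = (Icc 1 m).image A ∪ ((Icc 1 m).image A).image (insert k) := lab_image k m A
private def lgen1 : ℕ → ℕ := fun t => 2 * t
private def lc3 : ℕ → ℕ := fun _ => 3
private def lc4 : ℕ → ℕ := fun _ => 4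
private def lodd : ℕ → ℕ := fun t => 2 * t + 1
private def l2i1m2 : ℕ → ℕ := fun t => if t = 1 then 3 else if t = 2 then 5 else 2
private def l2i1m3 : ℕ → ℕ := fun t =>
  if t = 1 then 3 else if t = 2 then 5 else if t = 3 then 4 else if t = 4 then 7 else 6
private def l2i1m4 : ℕ → ℕ := fun t =>
  if t = 1 then 3 else if t = 2 then 5 else if t = 3 then 4 else if t = 4 then 9 else
  if t = 5 then 8 else if t = 6 then 7 else if t = 7 then 6 else
  if t % 2 = 0 then t + 3 else t + 1
private def l13 : ℕ → ℕ := fun t => if t = 1 then 5 else if t = 2 then 4 else 7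
private def l2i3m4 : ℕ → ℕ := fun t =>
  if t = 1 then 3 else if t = 2 then 9 else if t = 3 then 8 else if t = 4 then 2 else
  if t = 5 then 6 else if t % 2 = 0 then t + 5 else t + 3
private def l2gen (i : ℕ) : ℕ → ℕ := fun t =>
  if t ≤ i then 2 * t + 1
  else if (t - i) % 2 = 1 then 2 * (i + 1 + (t - i - 1) / 2) + 1
  else 2 * (i + 1 + (t - i - 1) / 2)

private lemma l13_inj : ∀ s t, 1 ≤ s → s ≤ 3 → 1 ≤ t → t ≤ 3 → l13 s = l13 t → s = t := by
  intro s t hs1 hs2 ht1 ht2 h; simp only [l13] at h; split_ifs at h <;> omega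

set_option maxHeartbeats 1000000 in
private lemma l2i3m4_inj : ∀ s t, 1 ≤ s → 1 ≤ t → l2i3m4 s = l2i3m4 t → s = t := by
  intro s t hs1 ht1 h; simp only [l2i3m4] at h; split_ifs at h <;> omega

set_option maxHeartbeats 1000000 in
private lemma l2i3m4_range (m : ℕ) (hm : 4 ≤ m) :
    ∀ t, 1 ≤ t → t ≤ 2 * m - 3 → 2 ≤ l2i3m4 t ∧ l2i3m4 t ≤ 2 * m + 1 := by
  intro t ha hb; simp only [l2i3m4]; split_ifs <;> omega

private lemma l2i3m4_tail_even (t : ℕ) (h : 3 ≤ t) : l2i3m4 (2 * t) = 2 * (t + 2) + 1 := by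
  simp only [l2i3m4]; split_ifs <;> omega

private lemma l2i3m4_tail_odd (t : ℕ) (h : 3 ≤ t) : l2i3m4 (2 * t + 1) = 2 * (t + 2) := by
  simp only [l2i3m4]; split_ifs <;> omega

private lemma l2i3m4_cov_even (c : ℕ) (h : 10 ≤ c) (hp : c % 2 = 0) : l2i3m4 (c - 3) = c := by
  simp only [l2i3m4]; split_ifs <;> omega

private lemma l2i3m4_cov_odd (c : ℕ) (h : 10 ≤ c) (hp : c % 2 = 1) : l2i3m4 (c - 5) = c := by
  simp only [l2i3m4]; split_ifs <;> omega

set_option maxHeartbeats 1000000 in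
private lemma l13_l2i3m4_disj : ∀ s t, 1 ≤ s → s ≤ 3 → 1 ≤ t → l13 s ≠ l2i3m4 t := by
  intro s t hs1 hs2 ht1; simp only [l13, l2i3m4]; split_ifs <;> omega

set_option maxHeartbeats 1600000 in
private lemma l2i1m4_inj : ∀ s t, 1 ≤ s → 1 ≤ t → l2i1m4 s = l2i1m4 t → s = t := by
  intro s t hs1 ht1 h; simp only [l2i1m4] at h; split_ifs at h <;> omega

set_option maxHeartbeats 1000000 in
private lemma l2i1m4_range (m : ℕ) (hm : 4 ≤ m) :
    ∀ t, 1 ≤ t → t ≤ 2 * m - 1 → 2 ≤ l2i1m4 t ∧ l2i1m4 t ≤ 2 * m + 1 := by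
  intro t ha hb; simp only [l2i1m4]; split_ifs <;> omega

private lemma l2i1m4_tail_even (t : ℕ) (h : 4 ≤ t) : l2i1m4 (2 * t) = 2 * (t + 1) + 1 := by
  simp only [l2i1m4]; split_ifs <;> omega

private lemma l2i1m4_tail_odd (t : ℕ) (h : 4 ≤ t) : l2i1m4 (2 * t + 1) = 2 * (t + 1) := by
  simp only [l2i1m4]; split_ifs <;> omega

private lemma l2i1m4_cov_even (c : ℕ) (h : 10 ≤ c) (hp : c % 2 = 0) : l2i1m4 (c - 1) = c := by
  simp only [l2i1m4]; split_ifs <;> omega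

private lemma l2i1m4_cov_odd (c : ℕ) (h : 10 ≤ c) (hp : c % 2 = 1) : l2i1m4 (c - 3) = c := by
  simp only [l2i1m4]; split_ifs <;> omega

set_option maxHeartbeats 1000000 in
private lemma lgen1_l2i1m4_disj : ∀ s t, 1 ≤ s → s ≤ 1 → 1 ≤ t → lgen1 s ≠ l2i1m4 t := by
  intro s t hs1 hs2 ht1; simp only [lgen1, l2i1m4]; split_ifs <;> omega

set_option maxHeartbeats 1000000 in
theorem stmt8 (k m : ℕ) (hk : 1 ≤ k) (S : Finset (Finset ℕ))
    (hS : ∀ B ∈ S, B ⊆ Finset.Icc 1 (k - 1) ∧ B.Nonempty) (hstar : IsStarColl m S)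
    (i : ℕ) (hodd : Odd i) (h1 : 1 ≤ i) (him : i ≤ m) :
    ∃ S₁ S₂ : Finset (Finset ℕ), Disjoint S₁ S₂ ∧
      S₁ ∪ S₂ = S ∪ S.image (insert k) ∧
      IsStarColl i S₁ ∧ IsStarColl (2 * m - i) S₂ := by
  obtain ⟨A, hA, hSA⟩ := hstar
  have hinj := hA.1
  have hkA : ∀ j, 1 ≤ j → j ≤ m → k ∉ A j := by
    intro j hj1 hjm hmem
    have hj : A j ∈ S := by
      rw [hSA]; exact Finset.mem_image_of_mem _ (Finset.mem_Icc.2 ⟨hj1, hjm⟩)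
    have := Finset.mem_Icc.1 ((hS _ hj).1 hmem); omega
  have hsub := hsub_of_isStar hA
  have labE : ∀ j, lab k A (2 * j) = A j := lab_even k A
  have labO : ∀ j, lab k A (2 * j + 1) = insert k (A j) := lab_odd k A
  have hssA : ∀ j, 1 ≤ j → j ≤ m → A j ⊂ insert k (A j) :=
    fun j ha hb => Finset.ssubset_insert (hkA j ha hb)
  have hssk : ∀ j, 2 ≤ j → j ≤ m → insert k (A j) ⊂ insert k (A 1) :=
    fun j ha hb => ins_ssub (hsub j ha hb) (hkA 1 (by omega) (by omega))
  rw [hSA]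
  obtain ⟨r, hr⟩ := hodd
  by_cases hi5 : 5 ≤ i
  · -- generic case
    have hm4 : 4 ≤ m := by omega
    have hu4 := (hA.2.2.2 hm4).1
    have hchain : ∀ t, 1 ≤ t → 2 * t + 1 ≤ m → A (2 * t + 1) ⊂ A (2 * t) :=
      fun t ht h => ((hA.2.2.2 hm4).2 t ht).2 h
    have h₁ : ∀ t, 1 ≤ t → t ≤ i → 2 ≤ lgen1 t ∧ lgen1 t ≤ 2 * m + 1 := by
      intro t ht1 ht2; simp only [lgen1]; omega
    have h₂ : ∀ t, 1 ≤ t → t ≤ 2 * m - i → 2 ≤ l2gen i t ∧ l2gen i t ≤ 2 * m + 1 := by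
      intro t ht1 ht2; simp only [l2gen]; split_ifs <;> omega
    have hcover : ∀ c, 2 ≤ c → c ≤ 2 * m + 1 →
        (∃ t, 1 ≤ t ∧ t ≤ i ∧ lgen1 t = c) ∨
        (∃ t, 1 ≤ t ∧ t ≤ 2 * m - i ∧ l2gen i t = c) := by
      intro c hc1 hc2
      by_cases hp : c % 2 = 0
      · by_cases hle : c / 2 ≤ i
        · exact Or.inl ⟨c / 2, by omega, by omega, by simp only [lgen1]; omega⟩
        · exact Or.inr ⟨2 * (c / 2) - i, by omega, by omega, by
            simp only [l2gen]; split_ifs <;> omega⟩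
      · by_cases hle : c / 2 ≤ i
        · exact Or.inr ⟨c / 2, by omega, by omega, by
            simp only [l2gen]; split_ifs <;> omega⟩
        · exact Or.inr ⟨2 * (c / 2) - i - 1, by omega, by omega, by
            simp only [l2gen]; split_ifs <;> omega⟩
    have hdisj : ∀ s t, 1 ≤ s → s ≤ i → 1 ≤ t → t ≤ 2 * m - i → lgen1 s ≠ l2gen i t := by
      intro s t hs1 hs2 ht1 ht2; simp only [lgen1, l2gen]; split_ifs <;> omega
    have hglue := glue_main hinj hkA lgen1 (l2gen i) h₁ h₂ hcover hdisj
    have hC : ∀ t, lab k A (lgen1 t) = A t := by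
      intro t; simp only [lgen1]; exact labE t
    have hBle : ∀ t, 1 ≤ t → t ≤ i → lab k A (l2gen i t) = insert k (A t) := by
      intro t ht1 ht2
      rw [show l2gen i t = 2 * t + 1 by simp only [l2gen]; split_ifs <;> omega]
      exact labO t
    have hBo : ∀ j, i + 1 ≤ j → j ≤ m → lab k A (l2gen i (2 * j - i - 1)) = insert k (A j) := by
      intro j hj1 hj2
      rw [show l2gen i (2 * j - i - 1) = 2 * j + 1 by simp only [l2gen]; split_ifs <;> omega]
      exact labO j
    have hBe : ∀ j, i + 1 ≤ j → j ≤ m → lab k A (l2gen i (2 * j - i)) = A j := by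
      intro j hj1 hj2
      rw [show l2gen i (2 * j - i) = 2 * j by simp only [l2gen]; split_ifs <;> omega]
      exact labE j
    refine ⟨_, _, hglue.1, hglue.2,
      ⟨fun t => lab k A (lgen1 t), ?_, rfl⟩, ⟨fun t => lab k A (l2gen i t), ?_, rfl⟩⟩
    · refine ⟨glue_inj hinj hkA lgen1 h₁ ?_, fun h => absurd h (by omega),
        fun h => absurd h (by omega), fun _ => ⟨?_, ?_⟩⟩
      · intro s t _ _ _ _ h; simp only [lgen1] at h; omega
      · beta_reduce; rw [hC 1, hC 2, hC 4]; exact hu4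
      · intro t ht
        refine ⟨fun h2 => ?_, fun h3 => ?_⟩ <;> beta_reduce
        · rw [hC (2 * t), hC 1]; exact hsub (2 * t) (by omega) (by omega)
        · rw [hC (2 * t + 1), hC (2 * t)]; exact hchain t ht (by omega)
    · refine ⟨glue_inj hinj hkA (l2gen i) h₂ ?_, fun h => absurd h (by omega),
        fun h => absurd h (by omega), fun _ => ⟨?_, ?_⟩⟩
      · intro s t hs1 hs2 ht1 ht2 h
        simp only [l2gen] at h; split_ifs at h <;> omega
      · beta_reduce
        rw [hBle 1 (by omega) (by omega), hBle 2 (by omega) (by omega),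
          hBle 4 (by omega) (by omega), hu4, Finset.insert_union_distrib]
      · intro t ht
        have hio : i % 2 = 1 := by omega
        refine ⟨fun h2 => ?_, fun h3 => ?_⟩ <;> beta_reduce
        · rw [hBle 1 (by omega) (by omega)]
          by_cases hle : 2 * t ≤ i
          · rw [hBle (2 * t) (by omega) hle]
            exact hssk (2 * t) (by omega) (by omega)
          · set j : ℕ := i + 1 + (2 * t - i - 1) / 2 with hj
            rw [show 2 * t = 2 * j - i - 1 by omega, hBo j (by omega) (by omega)]
            exact hssk j (by omega) (by omega)
        · by_cases hle : 2 * t + 1 ≤ i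
          · rw [hBle (2 * t + 1) (by omega) hle, hBle (2 * t) (by omega) (by omega)]
            exact ins_ssub (hchain t ht (by omega)) (hkA (2 * t) (by omega) (by omega))
          · have h2t : i < 2 * t := by omega
            set j : ℕ := i + 1 + (2 * t - i - 1) / 2 with hj
            rw [show 2 * t + 1 = 2 * j - i by omega, show 2 * t = 2 * j - i - 1 by omega,
              hBe j (by omega) (by omega), hBo j (by omega) (by omega)]
            exact hssA j (by omega) (by omega)
  · -- i ∈ {1, 3}
    by_cases hi3 : i = 3
    · subst hi3
      by_cases hm4 : 4 ≤ m
      · -- i = 3, m ≥ 4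
        have hu4 := (hA.2.2.2 hm4).1
        have hchain : ∀ t, 1 ≤ t → 2 * t + 1 ≤ m → A (2 * t + 1) ⊂ A (2 * t) :=
          fun t ht h => ((hA.2.2.2 hm4).2 t ht).2 h
        have h₁ : ∀ t, 1 ≤ t → t ≤ 3 → 2 ≤ l13 t ∧ l13 t ≤ 2 * m + 1 := by
          intro t ha hb; simp only [l13]; split_ifs <;> omega
        have h₂ := l2i3m4_range m hm4
        have hcover : ∀ c, 2 ≤ c → c ≤ 2 * m + 1 →
            (∃ t, 1 ≤ t ∧ t ≤ 3 ∧ l13 t = c) ∨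
            (∃ t, 1 ≤ t ∧ t ≤ 2 * m - 3 ∧ l2i3m4 t = c) := by
          intro c hc1 hc2
          by_cases hc9 : c ≤ 9
          · interval_cases c
            · exact Or.inr ⟨4, by omega, by omega, rfl⟩
            · exact Or.inr ⟨1, by omega, by omega, rfl⟩
            · exact Or.inl ⟨2, by omega, by omega, rfl⟩
            · exact Or.inl ⟨1, by omega, by omega, rfl⟩
            · exact Or.inr ⟨5, by omega, by omega, rfl⟩
            · exact Or.inl ⟨3, by omega, by omega, rfl⟩
            · exact Or.inr ⟨3, by omega, by omega, rfl⟩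
            · exact Or.inr ⟨2, by omega, by omega, rfl⟩
          · by_cases hp : c % 2 = 0
            · exact Or.inr ⟨c - 3, by omega, by omega, l2i3m4_cov_even c (by omega) hp⟩
            · exact Or.inr ⟨c - 5, by omega, by omega, l2i3m4_cov_odd c (by omega) (by omega)⟩
        have hdisj : ∀ s t, 1 ≤ s → s ≤ 3 → 1 ≤ t → t ≤ 2 * m - 3 → l13 s ≠ l2i3m4 t :=
          fun s t hs1 hs2 ht1 _ => l13_l2i3m4_disj s t hs1 hs2 ht1
        have hglue := glue_main hinj hkA l13 l2i3m4 h₁ h₂ hcover hdisj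
        refine ⟨_, _, hglue.1, hglue.2,
          ⟨fun t => lab k A (l13 t), ?_, rfl⟩, ⟨fun t => lab k A (l2i3m4 t), ?_, rfl⟩⟩
        · refine ⟨glue_inj hinj hkA l13 h₁ ?_, fun h => absurd h (by omega),
            fun _ => ?_, fun h => absurd h (by omega)⟩
          · exact fun s t hs1 hs2 ht1 ht2 h => l13_inj s t hs1 hs2 ht1 ht2 h
          · beta_reduce
            rw [show l13 1 = 2 * 2 + 1 from rfl, show l13 2 = 2 * 2 from rfl,
              show l13 3 = 2 * 3 + 1 from rfl, labO, labE, labO,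
              Finset.union_insert,
              Finset.union_eq_left.mpr (hchain 1 (by omega) (by omega)).subset]
        · refine ⟨glue_inj hinj hkA l2i3m4 h₂ ?_, fun h => absurd h (by omega),
            fun h => absurd h (by omega), fun _ => ⟨?_, ?_⟩⟩
          · exact fun s t hs1 _ ht1 _ h => l2i3m4_inj s t hs1 ht1 h
          · beta_reduce
            rw [show l2i3m4 1 = 2 * 1 + 1 from rfl, show l2i3m4 2 = 2 * 4 + 1 from rfl,
              show l2i3m4 4 = 2 * 1 from rfl, labO, labO, labE,
              Finset.insert_union,
              Finset.union_eq_right.mpr (hsub 4 (by omega) (by omega)).subset]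
          · intro t ht
            refine ⟨fun h2 => ?_, fun h3 => ?_⟩ <;> beta_reduce
            · rw [show l2i3m4 1 = 2 * 1 + 1 from rfl, labO]
              by_cases ht1 : t = 1
              · rw [ht1, show l2i3m4 (2 * 1) = 2 * 4 + 1 from rfl, labO]
                exact hssk 4 (by omega) (by omega)
              by_cases ht2 : t = 2
              · rw [ht2, show l2i3m4 (2 * 2) = 2 * 1 from rfl, labE]
                exact hssA 1 (by omega) (by omega)
              · rw [l2i3m4_tail_even t (by omega), labO]
                exact hssk (t + 2) (by omega) (by omega)
            · by_cases ht1 : t = 1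
              · rw [ht1, show l2i3m4 (2 * 1 + 1) = 2 * 4 from rfl,
                  show l2i3m4 (2 * 1) = 2 * 4 + 1 from rfl, labE, labO]
                exact hssA 4 (by omega) (by omega)
              by_cases ht2 : t = 2
              · rw [ht2, show l2i3m4 (2 * 2 + 1) = 2 * 3 from rfl,
                  show l2i3m4 (2 * 2) = 2 * 1 from rfl, labE, labE]
                exact hsub 3 (by omega) (by omega)
              · rw [l2i3m4_tail_odd t (by omega), l2i3m4_tail_even t (by omega), labE, labO]
                exact hssA (t + 2) (by omega) (by omega)
      · -- i = 3, m = 3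
        have hm3 : m = 3 := by omega
        have hu3 := hA.2.2.1 hm3
        have h₁ : ∀ t, 1 ≤ t → t ≤ 3 → 2 ≤ lgen1 t ∧ lgen1 t ≤ 2 * m + 1 := by
          intro t ha hb; simp only [lgen1]; omega
        have h₂ : ∀ t, 1 ≤ t → t ≤ 2 * m - 3 → 2 ≤ lodd t ∧ lodd t ≤ 2 * m + 1 := by
          intro t ha hb; simp only [lodd]; omega
        have hcover : ∀ c, 2 ≤ c → c ≤ 2 * m + 1 →
            (∃ t, 1 ≤ t ∧ t ≤ 3 ∧ lgen1 t = c) ∨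
            (∃ t, 1 ≤ t ∧ t ≤ 2 * m - 3 ∧ lodd t = c) := by
          intro c hc1 hc2
          by_cases hp : c % 2 = 0
          · exact Or.inl ⟨c / 2, by omega, by omega, by simp only [lgen1]; omega⟩
          · exact Or.inr ⟨c / 2, by omega, by omega, by simp only [lodd]; omega⟩
        have hdisj : ∀ s t, 1 ≤ s → s ≤ 3 → 1 ≤ t → t ≤ 2 * m - 3 → lgen1 s ≠ lodd t := by
          intro s t hs1 hs2 ht1 ht2; simp only [lgen1, lodd]; omega
        have hglue := glue_main hinj hkA lgen1 lodd h₁ h₂ hcover hdisj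
        have hC : ∀ t, lab k A (lgen1 t) = A t := by
          intro t; simp only [lgen1]; exact labE t
        refine ⟨_, _, hglue.1, hglue.2,
          ⟨fun t => lab k A (lgen1 t), ?_, rfl⟩, ⟨fun t => lab k A (lodd t), ?_, rfl⟩⟩
        · refine ⟨glue_inj hinj hkA lgen1 h₁ ?_, fun h => absurd h (by omega),
            fun _ => ?_, fun h => absurd h (by omega)⟩
          · intro s t hs1 hs2 ht1 ht2 h; simp only [lgen1] at h; omega
          · beta_reduce; rw [hC 1, hC 2, hC 3]; exact hu3
        · refine ⟨glue_inj hinj hkA lodd h₂ ?_, fun h => absurd h (by omega),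
            fun _ => ?_, fun h => absurd h (by omega)⟩
          · intro s t hs1 hs2 ht1 ht2 h; simp only [lodd] at h; omega
          · beta_reduce
            rw [show lodd 1 = 2 * 1 + 1 from rfl, show lodd 2 = 2 * 2 + 1 from rfl,
              show lodd 3 = 2 * 3 + 1 from rfl, labO, labO, labO, hu3,
              Finset.insert_union_distrib]
    · -- i = 1
      have hi1 : i = 1 := by omega
      subst hi1
      rcases (by omega : m = 1 ∨ m = 2 ∨ m = 3 ∨ 4 ≤ m) with hm | hm | hm | hm4
      · -- m = 1
        have h₁ : ∀ t, 1 ≤ t → t ≤ 1 → 2 ≤ lgen1 t ∧ lgen1 t ≤ 2 * m + 1 := by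
          intro t ha hb; simp only [lgen1]; omega
        have h₂ : ∀ t, 1 ≤ t → t ≤ 2 * m - 1 → 2 ≤ lc3 t ∧ lc3 t ≤ 2 * m + 1 := by
          intro t ha hb; simp only [lc3]; omega
        have hcover : ∀ c, 2 ≤ c → c ≤ 2 * m + 1 →
            (∃ t, 1 ≤ t ∧ t ≤ 1 ∧ lgen1 t = c) ∨
            (∃ t, 1 ≤ t ∧ t ≤ 2 * m - 1 ∧ lc3 t = c) := by
          intro c hc1 hc2
          rcases (by omega : c = 2 ∨ c = 3) with hc | hc
          · exact Or.inl ⟨1, by omega, by omega, by simp only [lgen1]; omega⟩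
          · exact Or.inr ⟨1, by omega, by omega, by simp only [lc3]; omega⟩
        have hdisj : ∀ s t, 1 ≤ s → s ≤ 1 → 1 ≤ t → t ≤ 2 * m - 1 → lgen1 s ≠ lc3 t := by
          intro s t hs1 hs2 ht1 ht2; simp only [lgen1, lc3]; omega
        have hglue := glue_main hinj hkA lgen1 lc3 h₁ h₂ hcover hdisj
        refine ⟨_, _, hglue.1, hglue.2,
          ⟨fun t => lab k A (lgen1 t), ?_, rfl⟩, ⟨fun t => lab k A (lc3 t), ?_, rfl⟩⟩
        · exact ⟨glue_inj hinj hkA lgen1 h₁ (by intro s t hs1 hs2 ht1 ht2 h; omega),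
            fun h => absurd h (by omega), fun h => absurd h (by omega),
            fun h => absurd h (by omega)⟩
        · exact ⟨glue_inj hinj hkA lc3 h₂ (by intro s t hs1 hs2 ht1 ht2 h; omega),
            fun h => absurd h (by omega), fun h => absurd h (by omega),
            fun h => absurd h (by omega)⟩
      · -- m = 2
        have h₁ : ∀ t, 1 ≤ t → t ≤ 1 → 2 ≤ lc4 t ∧ lc4 t ≤ 2 * m + 1 := by
          intro t ha hb; simp only [lc4]; omega
        have h₂ : ∀ t, 1 ≤ t → t ≤ 2 * m - 1 → 2 ≤ l2i1m2 t ∧ l2i1m2 t ≤ 2 * m + 1 := by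
          intro t ha hb; simp only [l2i1m2]; split_ifs <;> omega
        have hcover : ∀ c, 2 ≤ c → c ≤ 2 * m + 1 →
            (∃ t, 1 ≤ t ∧ t ≤ 1 ∧ lc4 t = c) ∨
            (∃ t, 1 ≤ t ∧ t ≤ 2 * m - 1 ∧ l2i1m2 t = c) := by
          intro c hc1 hc2
          rcases (by omega : c = 2 ∨ c = 3 ∨ c = 4 ∨ c = 5) with hc | hc | hc | hc
          · exact Or.inr ⟨3, by omega, by omega, by simp only [l2i1m2]; split_ifs <;> omega⟩
          · exact Or.inr ⟨1, by omega, by omega, by simp only [l2i1m2]; split_ifs <;> omega⟩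
          · exact Or.inl ⟨1, by omega, by omega, by simp only [lc4]; omega⟩
          · exact Or.inr ⟨2, by omega, by omega, by simp only [l2i1m2]; split_ifs <;> omega⟩
        have hdisj : ∀ s t, 1 ≤ s → s ≤ 1 → 1 ≤ t → t ≤ 2 * m - 1 → lc4 s ≠ l2i1m2 t := by
          intro s t hs1 hs2 ht1 ht2; simp only [lc4, l2i1m2]; split_ifs <;> omega
        have hglue := glue_main hinj hkA lc4 l2i1m2 h₁ h₂ hcover hdisj
        refine ⟨_, _, hglue.1, hglue.2,
          ⟨fun t => lab k A (lc4 t), ?_, rfl⟩, ⟨fun t => lab k A (l2i1m2 t), ?_, rfl⟩⟩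
        · exact ⟨glue_inj hinj hkA lc4 h₁ (by intro s t hs1 hs2 ht1 ht2 h; omega),
            fun h => absurd h (by omega), fun h => absurd h (by omega),
            fun h => absurd h (by omega)⟩
        · refine ⟨glue_inj hinj hkA l2i1m2 h₂ ?_, fun h => absurd h (by omega),
            fun _ => ?_, fun h => absurd h (by omega)⟩
          · intro s t hs1 hs2 ht1 ht2 h; simp only [l2i1m2] at h; split_ifs at h <;> omega
          · beta_reduce
            rw [show l2i1m2 1 = 2 * 1 + 1 from rfl, show l2i1m2 2 = 2 * 2 + 1 from rfl,
              show l2i1m2 3 = 2 * 1 from rfl, labO, labO, labE,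
              Finset.insert_union,
              Finset.union_eq_right.mpr (hsub 2 (by omega) (by omega)).subset]
      · -- m = 3
        have hu3 := hA.2.2.1 hm
        have h₁ : ∀ t, 1 ≤ t → t ≤ 1 → 2 ≤ lgen1 t ∧ lgen1 t ≤ 2 * m + 1 := by
          intro t ha hb; simp only [lgen1]; omega
        have h₂ : ∀ t, 1 ≤ t → t ≤ 2 * m - 1 → 2 ≤ l2i1m3 t ∧ l2i1m3 t ≤ 2 * m + 1 := by
          intro t ha hb; simp only [l2i1m3]; split_ifs <;> omega
        have hcover : ∀ c, 2 ≤ c → c ≤ 2 * m + 1 →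
            (∃ t, 1 ≤ t ∧ t ≤ 1 ∧ lgen1 t = c) ∨
            (∃ t, 1 ≤ t ∧ t ≤ 2 * m - 1 ∧ l2i1m3 t = c) := by
          intro c hc1 hc2
          rcases (by omega : c = 2 ∨ c = 3 ∨ c = 4 ∨ c = 5 ∨ c = 6 ∨ c = 7)
            with hc | hc | hc | hc | hc | hc
          · exact Or.inl ⟨1, by omega, by omega, by simp only [lgen1]; omega⟩
          · exact Or.inr ⟨1, by omega, by omega, by simp only [l2i1m3]; split_ifs <;> omega⟩
          · exact Or.inr ⟨3, by omega, by omega, by simp only [l2i1m3]; split_ifs <;> omega⟩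
          · exact Or.inr ⟨2, by omega, by omega, by simp only [l2i1m3]; split_ifs <;> omega⟩
          · exact Or.inr ⟨5, by omega, by omega, by simp only [l2i1m3]; split_ifs <;> omega⟩
          · exact Or.inr ⟨4, by omega, by omega, by simp only [l2i1m3]; split_ifs <;> omega⟩
        have hdisj : ∀ s t, 1 ≤ s → s ≤ 1 → 1 ≤ t → t ≤ 2 * m - 1 → lgen1 s ≠ l2i1m3 t := by
          intro s t hs1 hs2 ht1 ht2; simp only [lgen1, l2i1m3]; split_ifs <;> omega
        have hglue := glue_main hinj hkA lgen1 l2i1m3 h₁ h₂ hcover hdisj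
        refine ⟨_, _, hglue.1, hglue.2,
          ⟨fun t => lab k A (lgen1 t), ?_, rfl⟩, ⟨fun t => lab k A (l2i1m3 t), ?_, rfl⟩⟩
        · exact ⟨glue_inj hinj hkA lgen1 h₁ (by intro s t hs1 hs2 ht1 ht2 h; omega),
            fun h => absurd h (by omega), fun h => absurd h (by omega),
            fun h => absurd h (by omega)⟩
        · refine ⟨glue_inj hinj hkA l2i1m3 h₂ ?_, fun h => absurd h (by omega),
            fun h => absurd h (by omega), fun _ => ⟨?_, ?_⟩⟩
          · intro s t hs1 hs2 ht1 ht2 h; simp only [l2i1m3] at h; split_ifs at h <;> omega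
          · beta_reduce
            rw [show l2i1m3 1 = 2 * 1 + 1 from rfl, show l2i1m3 2 = 2 * 2 + 1 from rfl,
              show l2i1m3 4 = 2 * 3 + 1 from rfl, labO, labO, labO, hu3,
              Finset.insert_union_distrib]
          · intro t ht
            refine ⟨fun h2 => ?_, fun h3 => ?_⟩ <;> beta_reduce
            · rw [show l2i1m3 1 = 2 * 1 + 1 from rfl, labO]
              by_cases ht1 : t = 1
              · rw [show l2i1m3 (2 * t) = 2 * 2 + 1 by
                  simp only [l2i1m3]; split_ifs <;> omega, labO]
                exact hssk 2 (by omega) (by omega)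
              · rw [show l2i1m3 (2 * t) = 2 * 3 + 1 by
                  simp only [l2i1m3]; split_ifs <;> omega, labO]
                exact hssk 3 (by omega) (by omega)
            · by_cases ht1 : t = 1
              · rw [show l2i1m3 (2 * t + 1) = 2 * 2 by
                  simp only [l2i1m3]; split_ifs <;> omega,
                  show l2i1m3 (2 * t) = 2 * 2 + 1 by
                  simp only [l2i1m3]; split_ifs <;> omega, labE, labO]
                exact hssA 2 (by omega) (by omega)
              · rw [show l2i1m3 (2 * t + 1) = 2 * 3 by
                  simp only [l2i1m3]; split_ifs <;> omega,
                  show l2i1m3 (2 * t) = 2 * 3 + 1 by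
                  simp only [l2i1m3]; split_ifs <;> omega, labE, labO]
                exact hssA 3 (by omega) (by omega)
      · -- m ≥ 4
        have hu4 := (hA.2.2.2 hm4).1
        have h₁ : ∀ t, 1 ≤ t → t ≤ 1 → 2 ≤ lgen1 t ∧ lgen1 t ≤ 2 * m + 1 := by
          intro t ha hb; simp only [lgen1]; omega
        have h₂ := l2i1m4_range m hm4
        have hcover : ∀ c, 2 ≤ c → c ≤ 2 * m + 1 →
            (∃ t, 1 ≤ t ∧ t ≤ 1 ∧ lgen1 t = c) ∨
            (∃ t, 1 ≤ t ∧ t ≤ 2 * m - 1 ∧ l2i1m4 t = c) := by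
          intro c hc1 hc2
          by_cases hc9 : c ≤ 9
          · interval_cases c
            · exact Or.inl ⟨1, by omega, by omega, rfl⟩
            · exact Or.inr ⟨1, by omega, by omega, rfl⟩
            · exact Or.inr ⟨3, by omega, by omega, rfl⟩
            · exact Or.inr ⟨2, by omega, by omega, rfl⟩
            · exact Or.inr ⟨7, by omega, by omega, rfl⟩
            · exact Or.inr ⟨6, by omega, by omega, rfl⟩
            · exact Or.inr ⟨5, by omega, by omega, rfl⟩
            · exact Or.inr ⟨4, by omega, by omega, rfl⟩
          · by_cases hp : c % 2 = 0
            · exact Or.inr ⟨c - 1, by omega, by omega, l2i1m4_cov_even c (by omega) hp⟩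
            · exact Or.inr ⟨c - 3, by omega, by omega, l2i1m4_cov_odd c (by omega) (by omega)⟩
        have hdisj : ∀ s t, 1 ≤ s → s ≤ 1 → 1 ≤ t → t ≤ 2 * m - 1 → lgen1 s ≠ l2i1m4 t :=
          fun s t hs1 hs2 ht1 _ => lgen1_l2i1m4_disj s t hs1 hs2 ht1
        have hglue := glue_main hinj hkA lgen1 l2i1m4 h₁ h₂ hcover hdisj
        refine ⟨_, _, hglue.1, hglue.2,
          ⟨fun t => lab k A (lgen1 t), ?_, rfl⟩, ⟨fun t => lab k A (l2i1m4 t), ?_, rfl⟩⟩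
        · exact ⟨glue_inj hinj hkA lgen1 h₁ (by intro s t hs1 hs2 ht1 ht2 h; omega),
            fun h => absurd h (by omega), fun h => absurd h (by omega),
            fun h => absurd h (by omega)⟩
        · refine ⟨glue_inj hinj hkA l2i1m4 h₂ ?_, fun h => absurd h (by omega),
            fun h => absurd h (by omega), fun _ => ⟨?_, ?_⟩⟩
          · exact fun s t hs1 _ ht1 _ h => l2i1m4_inj s t hs1 ht1 h
          · beta_reduce
            rw [show l2i1m4 1 = 2 * 1 + 1 from rfl, show l2i1m4 2 = 2 * 2 + 1 from rfl,
              show l2i1m4 4 = 2 * 4 + 1 from rfl, labO, labO, labO, hu4,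
              Finset.insert_union_distrib]
          · intro t ht
            refine ⟨fun h2 => ?_, fun h3 => ?_⟩ <;> beta_reduce
            · rw [show l2i1m4 1 = 2 * 1 + 1 from rfl, labO]
              by_cases ht1 : t = 1
              · rw [ht1, show l2i1m4 (2 * 1) = 2 * 2 + 1 from rfl, labO]
                exact hssk 2 (by omega) (by omega)
              by_cases ht2 : t = 2
              · rw [ht2, show l2i1m4 (2 * 2) = 2 * 4 + 1 from rfl, labO]
                exact hssk 4 (by omega) (by omega)
              by_cases ht3 : t = 3
              · rw [ht3, show l2i1m4 (2 * 3) = 2 * 3 + 1 from rfl, labO]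
                exact hssk 3 (by omega) (by omega)
              · rw [l2i1m4_tail_even t (by omega), labO]
                exact hssk (t + 1) (by omega) (by omega)
            · by_cases ht1 : t = 1
              · rw [ht1, show l2i1m4 (2 * 1 + 1) = 2 * 2 from rfl,
                  show l2i1m4 (2 * 1) = 2 * 2 + 1 from rfl, labE, labO]
                exact hssA 2 (by omega) (by omega)
              by_cases ht2 : t = 2
              · rw [ht2, show l2i1m4 (2 * 2 + 1) = 2 * 4 from rfl,
                  show l2i1m4 (2 * 2) = 2 * 4 + 1 from rfl, labE, labO]
                exact hssA 4 (by omega) (by omega)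
              by_cases ht3 : t = 3
              · rw [ht3, show l2i1m4 (2 * 3 + 1) = 2 * 3 from rfl,
                  show l2i1m4 (2 * 3) = 2 * 3 + 1 from rfl, labE, labO]
                exact hssA 3 (by omega) (by omega)
              · rw [l2i1m4_tail_odd t (by omega), l2i1m4_tail_even t (by omega), labE, labO]
                exact hssA (t + 1) (by omega) (by omega)
end

section
/- Let A ⊆ P([k−1])∖{∅} be an m-star and let A' = {A ∪ {k} : A ∈ A}. Then A ∪ A' ∪ {{k}} is a (2m+1)-star. -/
open SimpleGraph

variable {V : Type*}

def starSeq (k m : ℕ) (A : ℕ → Finset ℕ) (n : ℕ) : Finset ℕ :=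
  if n = 2*m+1 then {k}
  else if n = 1 then insert k (A 1)
  else if n = 2 then A 1
  else if n = 3 then A m
  else if n % 2 = 0 then insert k (A (n/2))
  else A (n/2)

variable {k m : ℕ} {A : ℕ → Finset ℕ}

lemma starSeq_top : starSeq k m A (2*m+1) = {k} := by simp [starSeq]

lemma starSeq_one (hm : 1 ≤ m) : starSeq k m A 1 = insert k (A 1) := by
  rw [starSeq, if_neg (by omega), if_pos rfl]

lemma starSeq_two : starSeq k m A 2 = A 1 := by
  rw [starSeq, if_neg (by omega), if_neg (by omega), if_pos rfl]

lemma starSeq_three (hm : 2 ≤ m) : starSeq k m A 3 = A m := by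
  rw [starSeq, if_neg (by omega), if_neg (by omega), if_neg (by omega), if_pos rfl]

lemma starSeq_even {j : ℕ} (h2 : 2 ≤ j) : starSeq k m A (2*j) = insert k (A j) := by
  have e : 2*j/2 = j := by omega
  rw [starSeq, if_neg (by omega), if_neg (by omega), if_neg (by omega), if_neg (by omega),
    if_pos (by omega), e]

lemma starSeq_odd {j : ℕ} (h2 : 2 ≤ j) (hj : j ≤ m - 1) (hm : 2 ≤ m) :
    starSeq k m A (2*j+1) = A j := by
  have e : (2*j+1)/2 = j := by omega
  rw [starSeq, if_neg (by omega), if_neg (by omega), if_neg (by omega), if_neg (by omega),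
    if_neg (by omega), e]

lemma insert_ssubset_insert'' {s t : Finset ℕ} (hks : k ∉ s) (hkt : k ∉ t)
    (hsub : s ⊆ t) (hne : s ≠ t) : insert k s ⊂ insert k t := by
  refine Finset.ssubset_iff_subset_ne.mpr ⟨Finset.insert_subset_insert _ hsub, fun h => hne ?_⟩
  have := congrArg (Finset.erase · k) h
  simpa [Finset.erase_insert hks, Finset.erase_insert hkt] using this

lemma insert_inj'' {s t : Finset ℕ} (hks : k ∉ s) (hkt : k ∉ t)
    (h : insert k s = insert k t) : s = t := by
  have := congrArg (Finset.erase · k) h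
  simpa [Finset.erase_insert hks, Finset.erase_insert hkt] using this


theorem stmt9 (k m : ℕ) (hk : 1 ≤ k) (S : Finset (Finset ℕ))
    (hS : ∀ B ∈ S, B ⊆ Finset.Icc 1 (k - 1) ∧ B.Nonempty) (hstar : IsStarColl m S) :
    IsStarColl (2 * m + 1) (S ∪ S.image (insert k) ∪ {({k} : Finset ℕ)}) := by
  obtain ⟨A, ⟨hinj, hm2, hm3, hm4⟩, rfl⟩ := hstar
  have hkA : ∀ i, 1 ≤ i → i ≤ m → k ∉ A i ∧ (A i).Nonempty := by
    intro i h1 h2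
    have hmem : A i ∈ (Finset.Icc 1 m).image A :=
      Finset.mem_image.mpr ⟨i, Finset.mem_Icc.mpr ⟨h1, h2⟩, rfl⟩
    obtain ⟨hsub, hne⟩ := hS _ hmem
    refine ⟨fun hkk => ?_, hne⟩
    have := Finset.mem_Icc.mp (hsub hkk)
    omega
  rcases Nat.lt_or_ge m 1 with hm | hm1
  · -- m = 0
    have hm0 : m = 0 := by omega
    subst hm0
    refine ⟨fun _ => {k}, ⟨?_, ?_, ?_, ?_⟩, ?_⟩
    · intro i j h1 h2 h3 h4 _; omega
    · intro h; exact absurd h (by omega)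
    · intro h; exact absurd h (by omega)
    · intro h; exact absurd h (by omega)
    · simp
  rcases Nat.lt_or_ge m 2 with hm1' | hm2'
  · -- m = 1
    have hm0 : m = 1 := by omega
    subst hm0
    obtain ⟨hk1, hne1⟩ := hkA 1 le_rfl le_rfl
    obtain ⟨x, hx⟩ := hne1
    have hxk : x ≠ k := fun h => hk1 (h ▸ hx)
    refine ⟨starSeq k 1 A, ⟨?_, ?_, ?_, ?_⟩, ?_⟩
    · intro i j h1 h2 h3 h4 heq
      have e1 : starSeq k 1 A 1 = insert k (A 1) := starSeq_one le_rfl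
      have e2 : starSeq k 1 A 2 = A 1 := starSeq_two
      have e3 : starSeq k 1 A 3 = {k} := by simpa using (starSeq_top (k := k) (m := 1) (A := A))
      have h12 : starSeq k 1 A 1 ≠ starSeq k 1 A 2 := by
        rw [e1, e2]; intro h; exact hk1 (h ▸ Finset.mem_insert_self k (A 1))
      have h13 : starSeq k 1 A 1 ≠ starSeq k 1 A 3 := by
        rw [e1, e3]; intro h
        have : x ∈ ({k} : Finset ℕ) := h ▸ Finset.mem_insert_of_mem hx
        exact hxk (Finset.mem_singleton.mp this)
      have h23 : starSeq k 1 A 2 ≠ starSeq k 1 A 3 := by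
        rw [e2, e3]; intro h
        exact hxk (Finset.mem_singleton.mp (h ▸ hx))
      interval_cases i <;> interval_cases j <;> first
        | rfl
        | (exact absurd heq h12) | (exact absurd heq h13) | (exact absurd heq h23)
        | (exact absurd heq.symm h12) | (exact absurd heq.symm h13)
        | (exact absurd heq.symm h23)
    · intro h; exact absurd h (by omega)
    · intro _
      have e1 : starSeq k 1 A 1 = insert k (A 1) := starSeq_one le_rfl
      have e2 : starSeq k 1 A 2 = A 1 := starSeq_two
      have e3 : starSeq k 1 A 3 = {k} := by simpa using (starSeq_top (k := k) (m := 1) (A := A))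
      rw [e1, e2, e3, Finset.union_comm, ← Finset.insert_eq]
    · intro h; exact absurd h (by omega)
    · have e1 : starSeq k 1 A 1 = insert k (A 1) := starSeq_one le_rfl
      have e2 : starSeq k 1 A 2 = A 1 := starSeq_two
      have e3 : starSeq k 1 A 3 = {k} := by simpa using (starSeq_top (k := k) (m := 1) (A := A))
      have hicc : (Finset.Icc 1 (2*1+1) : Finset ℕ) = {1, 2, 3} := by decide
      rw [hicc, Finset.image_insert, Finset.image_insert, Finset.image_singleton, e1, e2, e3]
      ext T
      simp only [Finset.mem_insert, Finset.mem_singleton, Finset.mem_union, Finset.mem_image,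
        Finset.mem_Icc]
      constructor
      · rintro ((⟨i, ⟨hi1, hi2⟩, rfl⟩ | ⟨a, ⟨i, ⟨hi1, hi2⟩, rfl⟩, rfl⟩) | rfl)
        · have : i = 1 := by omega
          subst this; exact Or.inr (Or.inl rfl)
        · have : i = 1 := by omega
          subst this; exact Or.inl rfl
        · exact Or.inr (Or.inr rfl)
      · rintro (rfl | rfl | rfl)
        · exact Or.inl (Or.inr ⟨A 1, ⟨1, ⟨le_rfl, le_rfl⟩, rfl⟩, rfl⟩)
        · exact Or.inl (Or.inl ⟨1, ⟨le_rfl, le_rfl⟩, rfl⟩)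
        · exact Or.inr rfl
  · -- m ≥ 2
    have hsub : ∀ i, 2 ≤ i → i ≤ m → A i ⊆ A 1 := by
      intro i h2 hm'
      rcases Nat.lt_or_ge m 3 with hc | hc
      · -- m = 2, so i = 2
        have : m = 2 := by omega
        have : i = 2 := by omega
        subst this
        exact (hm2 (by omega)).1
      rcases Nat.lt_or_ge m 4 with hc' | hc'
      · -- m = 3
        have hm3' : A 1 = A 2 ∪ A 3 := hm3 (by omega)
        have hmm : m = 3 := by omega
        subst hmm
        interval_cases i
        · rw [hm3']; exact Finset.subset_union_left
        · rw [hm3']; exact Finset.subset_union_right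
      · -- m ≥ 4
        obtain ⟨_, hchain⟩ := hm4 hc'
        rcases Nat.even_or_odd i with ⟨j, hj⟩ | ⟨j, hj⟩
        · have := ((hchain j (by omega)).1 (by omega)).1
          rwa [show 2*j = i by omega] at this
        · have hodd := ((hchain j (by omega)).2 (by omega)).1
          have heven := ((hchain j (by omega)).1 (by omega)).1
          rw [show 2*j+1 = i by omega] at hodd
          exact hodd.trans heven
    have hne1 : ∀ i, 2 ≤ i → i ≤ m → A i ≠ A 1 := by
      intro i h2 hm' h
      have := hinj i 1 (by omega) hm' le_rfl (by omega) h
      omega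
    have hBval : ∀ n, 1 ≤ n → n ≤ 2*m → ∃ j, 1 ≤ j ∧ j ≤ m ∧
        ((starSeq k m A n = A j ∧
          (n = 2 ∧ j = 1 ∨ n = 3 ∧ j = m ∨ n = 2*j+1 ∧ 2 ≤ j ∧ j ≤ m-1)) ∨
         (starSeq k m A n = insert k (A j) ∧ (n = 1 ∧ j = 1 ∨ n = 2*j ∧ 2 ≤ j))) := by
      intro n h1 h2
      rcases Nat.lt_or_ge n 2 with h | h
      · have : n = 1 := by omega
        subst this
        exact ⟨1, le_rfl, by omega, Or.inr ⟨starSeq_one (by omega), Or.inl ⟨rfl, rfl⟩⟩⟩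
      rcases Nat.lt_or_ge n 3 with h | h
      · have : n = 2 := by omega
        subst this
        exact ⟨1, le_rfl, by omega, Or.inl ⟨starSeq_two, Or.inl ⟨rfl, rfl⟩⟩⟩
      rcases Nat.lt_or_ge n 4 with h | h
      · have : n = 3 := by omega
        subst this
        exact ⟨m, by omega, le_rfl, Or.inl ⟨starSeq_three hm2', Or.inr (Or.inl ⟨rfl, rfl⟩)⟩⟩
      rcases Nat.even_or_odd n with ⟨j, hj⟩ | ⟨j, hj⟩
      · refine ⟨j, by omega, by omega, Or.inr ⟨?_, Or.inr ⟨by omega, by omega⟩⟩⟩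
        rw [show n = 2*j by omega]
        exact starSeq_even (by omega)
      · refine ⟨j, by omega, by omega, Or.inl ⟨?_, Or.inr (Or.inr ⟨by omega, by omega, by omega⟩)⟩⟩
        rw [show n = 2*j+1 by omega]
        exact starSeq_odd (by omega) (by omega) hm2'
    have hnotk : ∀ T j, 1 ≤ j → j ≤ m → starSeq k m A (2*m+1) = T →
        (T = A j ∨ T = insert k (A j)) → False := by
      intro T j hj1 hj2 htop hcase
      rw [starSeq_top] at htop
      obtain ⟨hkj, x, hx⟩ := hkA j hj1 hj2
      have hxk : x ≠ k := fun h => hkj (h ▸ hx)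
      rcases hcase with rfl | rfl
      · exact hxk (Finset.mem_singleton.mp (htop ▸ hx))
      · exact hxk (Finset.mem_singleton.mp (htop ▸ Finset.mem_insert_of_mem hx))
    refine ⟨starSeq k m A, ⟨?_, ?_, ?_, ?_⟩, ?_⟩
    · -- injectivity
      intro i j h1 h2 h3 h4 heq
      by_cases hi : i = 2*m+1 <;> by_cases hj : j = 2*m+1
      · omega
      · obtain ⟨j', hj1, hj2, hc⟩ := hBval j h3 (by omega)
        subst hi
        rcases hc with ⟨hv, _⟩ | ⟨hv, _⟩
        · exact absurd (hnotk _ j' hj1 hj2 (heq.trans hv) (Or.inl rfl)) not_false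
        · exact absurd (hnotk _ j' hj1 hj2 (heq.trans hv) (Or.inr rfl)) not_false
      · obtain ⟨i', hi1, hi2, hc⟩ := hBval i h1 (by omega)
        subst hj
        rcases hc with ⟨hv, _⟩ | ⟨hv, _⟩
        · exact absurd (hnotk _ i' hi1 hi2 (heq.symm.trans hv) (Or.inl rfl)) not_false
        · exact absurd (hnotk _ i' hi1 hi2 (heq.symm.trans hv) (Or.inr rfl)) not_false
      · obtain ⟨i', hi1, hi2, hci⟩ := hBval i h1 (by omega)
        obtain ⟨j', hj1, hj2, hcj⟩ := hBval j h3 (by omega)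
        have hki' := (hkA i' hi1 hi2).1
        have hkj' := (hkA j' hj1 hj2).1
        rcases hci with ⟨hvi, hpi⟩ | ⟨hvi, hpi⟩ <;> rcases hcj with ⟨hvj, hpj⟩ | ⟨hvj, hpj⟩
        · have : A i' = A j' := by rw [← hvi, ← hvj, heq]
          have := hinj i' j' hi1 hi2 hj1 hj2 this
          omega
        · exfalso
          have : A i' = insert k (A j') := by rw [← hvi, ← hvj, heq]
          exact hki' (this ▸ Finset.mem_insert_self k (A j'))
        · exfalso
          have : A j' = insert k (A i') := by rw [← hvj, ← hvi, heq]
          exact hkj' (this ▸ Finset.mem_insert_self k (A i'))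
        · have : insert k (A i') = insert k (A j') := by rw [← hvi, ← hvj, heq]
          have := hinj i' j' hi1 hi2 hj1 hj2 (insert_inj'' hki' hkj' this)
          omega
    · intro h; exact absurd h (by omega)
    · intro h; exact absurd h (by omega)
    · intro _
      constructor
      · -- B 1 = B 2 ∪ B 4
        have e4 : starSeq k m A 4 = insert k (A 2) := by
          have := starSeq_even (k := k) (m := m) (A := A) (j := 2) le_rfl
          norm_num at this; exact this
        rw [starSeq_one (by omega), starSeq_two, e4, Finset.union_insert,
          Finset.union_eq_left.mpr (hsub 2 le_rfl hm2')]
      · intro i hi1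
        constructor
        · intro h2i
          rw [starSeq_one (by omega)]
          rcases Nat.lt_or_ge i 2 with h | h
          · have : i = 1 := by omega
            subst this
            rw [show 2*1 = 2 by norm_num, starSeq_two]
            exact Finset.ssubset_insert (hkA 1 le_rfl (by omega)).1
          · rw [starSeq_even h]
            exact insert_ssubset_insert'' (hkA i (by omega) (by omega)).1
              (hkA 1 le_rfl (by omega)).1 (hsub i h (by omega)) (hne1 i h (by omega))
        · intro h2i1
          rcases Nat.lt_or_ge i 2 with h | h
          · have : i = 1 := by omega
            subst this
            rw [show 2*1 = 2 by norm_num, show 2*1+1 = 3 by norm_num, starSeq_two,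
              starSeq_three hm2']
            exact Finset.ssubset_iff_subset_ne.mpr ⟨hsub m hm2' le_rfl, hne1 m hm2' le_rfl⟩
          rcases Nat.lt_or_ge i m with h' | h'
          · rw [starSeq_even h, starSeq_odd h (by omega) hm2']
            exact Finset.ssubset_insert (hkA i (by omega) (by omega)).1
          · have him : i = m := by omega
            rw [him, starSeq_top, starSeq_even hm2']
            refine Finset.ssubset_iff_subset_ne.mpr
              ⟨Finset.singleton_subset_iff.mpr (Finset.mem_insert_self k _), fun hh => ?_⟩
            obtain ⟨hki, x, hx⟩ := hkA m (by omega) le_rfl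
            have hxk : x ≠ k := fun h => hki (h ▸ hx)
            exact hxk (Finset.mem_singleton.mp (hh ▸ Finset.mem_insert_of_mem hx))
    · -- image equality
      apply Finset.Subset.antisymm
      · intro T hT
        simp only [Finset.mem_union, Finset.mem_singleton, Finset.mem_image] at hT
        rw [Finset.mem_image]
        rcases hT with (⟨j, hj, rfl⟩ | ⟨a, ha, rfl⟩) | rfl
        · obtain ⟨hj1, hj2⟩ := Finset.mem_Icc.mp hj
          rcases Nat.lt_or_ge j 2 with h | h
          · have : j = 1 := by omega
            subst this
            exact ⟨2, Finset.mem_Icc.mpr ⟨by omega, by omega⟩, starSeq_two⟩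
          rcases Nat.lt_or_ge j m with h' | h'
          · exact ⟨2*j+1, Finset.mem_Icc.mpr ⟨by omega, by omega⟩,
              starSeq_odd h (by omega) hm2'⟩
          · have : j = m := by omega
            subst this
            exact ⟨3, Finset.mem_Icc.mpr ⟨by omega, by omega⟩, starSeq_three hm2'⟩
        · obtain ⟨j, hj, rfl⟩ := ha
          obtain ⟨hj1, hj2⟩ := Finset.mem_Icc.mp hj
          rcases Nat.lt_or_ge j 2 with h | h
          · have : j = 1 := by omega
            subst this
            exact ⟨1, Finset.mem_Icc.mpr ⟨le_rfl, by omega⟩, starSeq_one (by omega)⟩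
          · exact ⟨2*j, Finset.mem_Icc.mpr ⟨by omega, by omega⟩, starSeq_even h⟩
        · exact ⟨2*m+1, Finset.mem_Icc.mpr ⟨by omega, le_rfl⟩, starSeq_top⟩
      · intro T hT
        obtain ⟨n, hn, rfl⟩ := Finset.mem_image.mp hT
        obtain ⟨hn1, hn2⟩ := Finset.mem_Icc.mp hn
        simp only [Finset.mem_union, Finset.mem_singleton, Finset.mem_image]
        by_cases htop : n = 2*m+1
        · subst htop
          exact Or.inr starSeq_top
        · obtain ⟨j, hj1, hj2, hc⟩ := hBval n hn1 (by omega)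
          rcases hc with ⟨hv, _⟩ | ⟨hv, _⟩
          · exact Or.inl (Or.inl ⟨j, Finset.mem_Icc.mpr ⟨hj1, hj2⟩, hv.symm⟩)
          · exact Or.inl (Or.inr ⟨A j, ⟨j, Finset.mem_Icc.mpr ⟨hj1, hj2⟩, rfl⟩, hv.symm⟩)
end

section
/- Let A ⊆ P([k−1])∖{∅} be an m-star and let A' = {A ∪ {k} : A ∈ A}. Then A ∪ A' is a 2m-star. -/
open SimpleGraph

variable {V : Type*}

/-- The witnessing ordering for the `2m`-star: `A'1, A1, Am, A'2, A2, A'3, A3, …`. -/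
def starB (k m : ℕ) (A : ℕ → Finset ℕ) : ℕ → Finset ℕ := fun j =>
  if j = 1 then insert k (A 1) else if j = 2 then A 1 else if j = 3 then A m
  else if j % 2 = 0 then insert k (A (j / 2)) else A (j / 2)

lemma starB_one (k m : ℕ) (A : ℕ → Finset ℕ) : starB k m A 1 = insert k (A 1) := rfl

lemma starB_two (k m : ℕ) (A : ℕ → Finset ℕ) : starB k m A 2 = A 1 := rfl

lemma starB_three (k m : ℕ) (A : ℕ → Finset ℕ) : starB k m A 3 = A m := rfl

lemma starB_even (k m : ℕ) (A : ℕ → Finset ℕ) {i : ℕ} (h : 2 ≤ i) :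
    starB k m A (2 * i) = insert k (A i) := by
  have hd : 2 * i / 2 = i := by omega
  simp only [starB, if_neg (by omega : ¬ 2 * i = 1), if_neg (by omega : ¬ 2 * i = 2),
    if_neg (by omega : ¬ 2 * i = 3), if_pos (by omega : 2 * i % 2 = 0), hd]

lemma starB_odd (k m : ℕ) (A : ℕ → Finset ℕ) {i : ℕ} (h : 2 ≤ i) :
    starB k m A (2 * i + 1) = A i := by
  have hd : (2 * i + 1) / 2 = i := by omega
  simp only [starB, if_neg (by omega : ¬ 2 * i + 1 = 1), if_neg (by omega : ¬ 2 * i + 1 = 2),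
    if_neg (by omega : ¬ 2 * i + 1 = 3), if_neg (by omega : ¬ (2 * i + 1) % 2 = 0), hd]

theorem stmt10 (k m : ℕ) (hk : 1 ≤ k) (S : Finset (Finset ℕ))
    (hS : ∀ B ∈ S, B ⊆ Finset.Icc 1 (k - 1) ∧ B.Nonempty) (hstar : IsStarColl m S) :
    IsStarColl (2 * m) (S ∪ S.image (insert k)) := by
  obtain ⟨A, hA, hSA⟩ := hstar
  have hknot : ∀ i, 1 ≤ i → i ≤ m → k ∉ A i := by
    intro i h1 h2 hk'
    have hmem : A i ∈ S := by
      rw [hSA]; exact Finset.mem_image_of_mem _ (Finset.mem_Icc.mpr ⟨h1, h2⟩)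
    have := (hS _ hmem).1 hk'
    rw [Finset.mem_Icc] at this; omega
  have hinj := hA.1
  -- every later set is strictly below `A 1`
  have hsub : ∀ i, 2 ≤ i → i ≤ m → A i ⊂ A 1 := by
    intro i h2 him
    rcases Nat.lt_or_ge m 4 with hm | hm
    · have hm2 : 2 ≤ m := le_trans h2 him
      interval_cases m
      · have : i = 2 := by omega
        subst this; exact hA.2.1 rfl
      · have h13 := hA.2.2.1 rfl
        have hs : A i ⊆ A 1 := by
          rw [h13]
          rcases (by omega : i = 2 ∨ i = 3) with h | h <;> subst h
          · exact Finset.subset_union_left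
          · exact Finset.subset_union_right
        refine hs.ssubset_of_ne fun h => ?_
        have := hinj i 1 (by omega) (by omega) (by omega) (by omega) h
        omega
    · obtain ⟨-, hstep⟩ := hA.2.2.2 hm
      by_cases hpar : i % 2 = 0
      · have he : i = 2 * (i / 2) := by omega
        rw [he]; exact (hstep (i / 2) (by omega)).1 (by omega)
      · have ho : i = 2 * (i / 2) + 1 := by omega
        have h1 : A (2 * (i / 2) + 1) ⊂ A (2 * (i / 2)) := (hstep (i / 2) (by omega)).2 (by omega)
        have h2' : A (2 * (i / 2)) ⊂ A 1 := (hstep (i / 2) (by omega)).1 (by omega)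
        rw [ho]; exact h1.trans h2'
  have hins : ∀ i, 2 ≤ i → i ≤ m → insert k (A i) ⊂ insert k (A 1) := by
    intro i h2 him
    have hsi := hsub i h2 him
    rw [Finset.ssubset_def]
    constructor
    · exact Finset.insert_subset_insert _ hsi.subset
    · intro hcon
      obtain ⟨x, hxt, hxs⟩ := Finset.exists_of_ssubset hsi
      have hx1 : x ∈ insert k (A 1) := Finset.mem_insert_of_mem hxt
      have := hcon hx1
      rw [Finset.mem_insert] at this
      rcases this with h | h
      · exact hknot 1 le_rfl (by omega) (h ▸ hxt)
      · exact hxs h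
  -- characterization of the values of starB on positions 1..2m
  have hchar : ∀ j, 1 ≤ j → j ≤ 2 * m → ∃ a, 1 ≤ a ∧ a ≤ m ∧
      ((starB k m A j = insert k (A a) ∧
          ((j = 1 ∧ a = 1) ∨ (4 ≤ j ∧ j % 2 = 0 ∧ a = j / 2))) ∨
        (starB k m A j = A a ∧
          ((j = 2 ∧ a = 1) ∨ (j = 3 ∧ a = m) ∨ (5 ≤ j ∧ j % 2 = 1 ∧ a = j / 2)))) := by
    intro j h1 h2
    rcases (by omega : j = 1 ∨ j = 2 ∨ j = 3 ∨ (4 ≤ j ∧ j % 2 = 0) ∨ (5 ≤ j ∧ j % 2 = 1))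
      with h | h | h | h | h
    · exact ⟨1, le_rfl, by omega, Or.inl ⟨by rw [h, starB_one], Or.inl ⟨h, rfl⟩⟩⟩
    · exact ⟨1, le_rfl, by omega, Or.inr ⟨by rw [h, starB_two], Or.inl ⟨h, rfl⟩⟩⟩
    · exact ⟨m, by omega, le_rfl, Or.inr ⟨by rw [h, starB_three], Or.inr (Or.inl ⟨h, rfl⟩)⟩⟩
    · refine ⟨j / 2, by omega, by omega, Or.inl ⟨?_, Or.inr ⟨h.1, h.2, rfl⟩⟩⟩
      have hj : j = 2 * (j / 2) := by omega
      have hd : 2 * (j / 2) / 2 = j / 2 := by omega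
      rw [hj, starB_even k m A (by omega), hd]
    · refine ⟨j / 2, by omega, by omega, Or.inr ⟨?_, Or.inr (Or.inr ⟨h.1, h.2, rfl⟩)⟩⟩
      have hj : j = 2 * (j / 2) + 1 := by omega
      have hd : (2 * (j / 2) + 1) / 2 = j / 2 := by omega
      rw [hj, starB_odd k m A (by omega), hd]
  refine ⟨starB k m A, ⟨?_, ?_, ?_, ?_⟩, ?_⟩
  · -- injectivity
    intro i j h1i hi h1j hj heq
    obtain ⟨a, ha1, ha2, hca⟩ := hchar i h1i hi
    obtain ⟨b, hb1, hb2, hcb⟩ := hchar j h1j hj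
    rcases hca with ⟨hBa, hia⟩ | ⟨hBa, hia⟩ <;> rcases hcb with ⟨hBb, hib⟩ | ⟨hBb, hib⟩
    · rw [hBa, hBb] at heq
      have hab : A a = A b := by
        have h' := congrArg (fun s => Finset.erase s k) heq
        simpa [Finset.erase_insert (hknot a ha1 ha2), Finset.erase_insert (hknot b hb1 hb2)]
          using h'
      have := hinj a b ha1 ha2 hb1 hb2 hab
      omega
    · exfalso
      rw [hBa, hBb] at heq
      exact hknot b hb1 hb2 (heq ▸ Finset.mem_insert_self k (A a))
    · exfalso
      rw [hBa, hBb] at heq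
      exact hknot a ha1 ha2 (heq.symm ▸ Finset.mem_insert_self k (A b))
    · rw [hBa, hBb] at heq
      have := hinj a b ha1 ha2 hb1 hb2 heq
      omega
  · -- 2m = 2
    intro h2
    rw [starB_two, starB_one]
    exact Finset.ssubset_insert (hknot 1 le_rfl (by omega))
  · intro h3; omega
  · -- 4 ≤ 2m
    intro h4
    have hm2 : 2 ≤ m := by omega
    constructor
    · rw [starB_one, starB_two, show (4 : ℕ) = 2 * 2 by rfl, starB_even k m A le_rfl]
      have h21 : A 2 ⊆ A 1 := (hsub 2 le_rfl hm2).subset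
      ext x
      simp only [Finset.mem_insert, Finset.mem_union]
      constructor
      · rintro (rfl | hx)
        · exact Or.inr (Or.inl rfl)
        · exact Or.inl hx
      · rintro (hx | rfl | hx)
        · exact Or.inr hx
        · exact Or.inl rfl
        · exact Or.inr (h21 hx)
    · intro i h1
      constructor
      · intro h2i
        rcases (by omega : i = 1 ∨ 2 ≤ i) with rfl | h2
        · rw [show 2 * 1 = 2 by rfl, starB_two, starB_one]
          exact Finset.ssubset_insert (hknot 1 le_rfl (by omega))
        · rw [starB_even k m A h2, starB_one]
          exact hins i h2 (by omega)
      · intro h2i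
        rcases (by omega : i = 1 ∨ 2 ≤ i) with rfl | h2
        · rw [show 2 * 1 + 1 = 3 by rfl, starB_three, show 2 * 1 = 2 by rfl, starB_two]
          exact hsub m hm2 le_rfl
        · rw [starB_odd k m A h2, starB_even k m A h2]
          exact Finset.ssubset_insert (hknot i (by omega) (by omega))
  · -- the set equality
    rw [hSA]
    ext X
    simp only [Finset.mem_union, Finset.mem_image, Finset.mem_Icc]
    constructor
    · rintro (⟨i, ⟨hi1, hi2⟩, rfl⟩ | ⟨Y, ⟨i, ⟨hi1, hi2⟩, rfl⟩, rfl⟩)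
      · rcases (by omega : i = 1 ∨ (2 ≤ m ∧ i = m) ∨ (2 ≤ i ∧ i ≤ m - 1))
          with rfl | ⟨hm2, heq⟩ | ⟨h2, hle⟩
        · exact ⟨2, ⟨by omega, by omega⟩, starB_two k m A⟩
        · refine ⟨3, ⟨by omega, by omega⟩, ?_⟩
          rw [starB_three, heq]
        · exact ⟨2 * i + 1, ⟨by omega, by omega⟩, starB_odd k m A h2⟩
      · rcases (by omega : i = 1 ∨ 2 ≤ i) with rfl | h2
        · exact ⟨1, ⟨le_rfl, by omega⟩, starB_one k m A⟩
        · exact ⟨2 * i, ⟨by omega, by omega⟩, starB_even k m A h2⟩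
    · rintro ⟨j, ⟨hj1, hj2⟩, rfl⟩
      obtain ⟨a, ha1, ha2, hca⟩ := hchar j hj1 hj2
      rcases hca with ⟨hBa, -⟩ | ⟨hBa, -⟩
      · exact Or.inr ⟨A a, ⟨a, ⟨ha1, ha2⟩, rfl⟩, hBa.symm⟩
      · exact Or.inl ⟨a, ⟨ha1, ha2⟩, hBa.symm⟩
end
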